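/- arXiv:2107.06309 — 7 statements merged into one kernel-verified Lean document; each statement's English description precedes it below -/
import Mathlib

section
/- Let f : {±1}^n → [-1,1] be a function of degree d, and let ℓ ≥ 0. Then the degree-ℓ homogeneous part f_ℓ satisfies ‖f_ℓ‖_∞ ≤ |C(d,ℓ)| if d ≡ ℓ (mod 2), and ‖f_ℓ‖_∞ ≤ |C(d-1,ℓ)| otherwise, where C(d,ℓ) denotes the coefficient of z^ℓ in the degree-d Chebyshev polynomial T_d. -/
/-- The sign ±1 corresponding to a boolean: `true ↦ 1`, `false ↦ -1`. -/
noncomputable def sgn (b : Bool) : ℝ := if b then 1 else -1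

/-- The character (monomial) `χ_S(x) = ∏_{j ∈ S} x_j` on the cube `{±1}^n`. -/
noncomputable def chi {n : ℕ} (S : Finset (Fin n)) (x : Fin n → Bool) : ℝ :=
  ∏ i ∈ S, sgn (x i)

/-- The Fourier coefficient `f̂(S) = E[f(X) χ_S(X)]` for `X` uniform on `{±1}^n`. -/
noncomputable def fcoeff {n : ℕ} (f : (Fin n → Bool) → ℝ) (S : Finset (Fin n)) : ℝ :=
  (∑ x : Fin n → Bool, f x * chi S x) / 2 ^ n

/-- The degree-`ℓ` homogeneous part `f_ℓ(x) = ∑_{|S| = ℓ} f̂(S) χ_S(x)`. -/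
noncomputable def homPart {n : ℕ} (f : (Fin n → Bool) → ℝ) (ℓ : ℕ) (x : Fin n → Bool) : ℝ :=
  ∑ S ∈ Finset.univ.filter (fun S : Finset (Fin n) => S.card = ℓ), fcoeff f S * chi S x

/-- `C(d, ℓ)`: the coefficient of `z^ℓ` in the degree-`d` Chebyshev polynomial `T_d`. -/
noncomputable def chebCoeff (d ℓ : ℕ) : ℝ := (Polynomial.Chebyshev.T ℝ (d : ℤ)).coeff ℓ

/-!
Fix `x` and let `q(t) = ∑ₖ f_k(x) tᵏ`. For `t ∈ [-1, 1]`, `q(t)` is the average of `f(y)` over a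
`t`-correlated copy `y` of `x` (the noise operator), so `|q| ≤ 1` on `[-1, 1]`; and `deg q ≤ d`.

For a polynomial `q` of degree at most `m` bounded by `1` on `[-1, 1]` and `ℓ ≡ m (mod 2)`,
`|q_ℓ| ≤ |C(m, ℓ)|` (V. A. Markov): Lagrange interpolation at the extremal points `cos(kπ/m)` of
`T_m` writes `q_ℓ` as `∑ₖ q(cos(kπ/m)) wₖ`, and since the nodes are symmetric about `0`, the
weights satisfy `sign wₖ = ε (-1)ᵏ = ε T_m(cos(kπ/m))` for a global sign `ε`; hence `T_m`
maximises `ε q_ℓ`. When `ℓ ≢ d`, apply this to the part `(q(t) + (-1)^ℓ q(-t)) / 2` of `q` of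
the parity of `ℓ`, which has degree at most `d - 1`.
-/

open Polynomial Finset

theorem Multiset.map_neg_cons_cases {R : Type*} [CommRing R] [LinearOrder R] [IsStrictOrderedRing R]
    {a : R} {M : Multiset R} (h : (a ::ₘ M).map Neg.neg = a ::ₘ M) :
    (a = 0 ∧ M.map Neg.neg = M) ∨ ∃ M', M = -a ::ₘ M' ∧ M'.map Neg.neg = M' := by
  by_cases ha : a = 0
  · subst ha
    exact Or.inl ⟨rfl, by simpa using h⟩
  have hmem : -a ∈ M := by
    have : -a ∈ a ::ₘ M := h ▸ mem_map_of_mem _ (mem_cons_self a M)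
    exact (mem_cons.mp this).resolve_left fun h' => ha (by linarith)
  obtain ⟨M', rfl⟩ := exists_cons_of_mem hmem
  exact Or.inr ⟨M', rfl, by simpa [cons_swap] using h⟩

namespace Polynomial

variable {R : Type*} [CommRing R] [LinearOrder R]

-- The coefficient pattern of `X ^ z * ∏ᵢ (X ^ 2 - bᵢ ^ 2)` with `z + 2 * #b = D`.
structure HasAlternatingCoeffs (D : ℕ) (p : R[X]) : Prop where
  natDegree_le : p.natDegree ≤ D
  coeff_eq_zero : ∀ t, t % 2 ≠ D % 2 → p.coeff t = 0
  nonneg : ∀ t, 0 ≤ (-1) ^ ((D - t) / 2) * p.coeff t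

namespace HasAlternatingCoeffs

variable {D : ℕ} {p : R[X]}

theorem one [IsStrictOrderedRing R] : HasAlternatingCoeffs 0 (1 : R[X]) where
  natDegree_le := natDegree_one.le
  coeff_eq_zero t ht := by rw [coeff_one, if_neg (by omega)]
  nonneg t := by rw [coeff_one]; split_ifs <;> simp

theorem coeff_eq_zero_of_lt (hp : HasAlternatingCoeffs D p) {t : ℕ} (ht : D < t) :
    p.coeff t = 0 :=
  coeff_eq_zero_of_natDegree_lt (hp.natDegree_le.trans_lt ht)

theorem X_mul (hp : HasAlternatingCoeffs D p) : HasAlternatingCoeffs (D + 1) (X * p) where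
  natDegree_le := by
    have := hp.natDegree_le
    have := natDegree_X_le (R := R)
    exact natDegree_mul_le.trans (by omega)
  coeff_eq_zero
    | 0, _ => coeff_X_mul_zero p
    | s + 1, hs => by rw [coeff_X_mul, hp.coeff_eq_zero s (by omega)]
  nonneg
    | 0 => by simp
    | s + 1 => by
      rw [coeff_X_mul, show (D + 1 - (s + 1)) / 2 = (D - s) / 2 by omega]
      exact hp.nonneg s

theorem X_sq_sub_C_mul [IsStrictOrderedRing R] (hp : HasAlternatingCoeffs D p) {b : R}
    (hb : 0 ≤ b) : HasAlternatingCoeffs (D + 2) ((X ^ 2 - C b) * p) := by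
  have hcoeff : ∀ t, ((X ^ 2 - C b) * p).coeff t
      = (if 2 ≤ t then p.coeff (t - 2) else 0) - b * p.coeff t := fun t => by
    rw [sub_mul, coeff_sub, coeff_X_pow_mul', coeff_C_mul]
  refine ⟨?_, fun t ht => ?_, fun t => ?_⟩
  · have := hp.natDegree_le
    have : (X ^ 2 - C b : R[X]).natDegree ≤ 2 :=
      natDegree_sub_le_iff_left (by simp) |>.mpr (by simp)
    exact natDegree_mul_le.trans (by omega)
  · rw [hcoeff, hp.coeff_eq_zero t (by omega)]
    split_ifs
    · rw [hp.coeff_eq_zero (t - 2) (by omega)]; simp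
    · simp
  · have shifted : 0 ≤ (-1) ^ ((D + 2 - t) / 2) * (if 2 ≤ t then p.coeff (t - 2) else 0) := by
      split_ifs with h
      · rw [show D + 2 - t = D - (t - 2) by omega]; exact hp.nonneg _
      · simp
    have scaled : 0 ≤ -(-1) ^ ((D + 2 - t) / 2) * p.coeff t := by
      rcases le_or_gt t D with h | h
      · rw [show (D + 2 - t) / 2 = (D - t) / 2 + 1 by omega, pow_succ]
        simpa using hp.nonneg t
      · simp [hp.coeff_eq_zero_of_lt h]
    rw [hcoeff]
    nlinarith [mul_nonneg hb scaled]

theorem nonneg_coeff_X_sub_C_mul (hp : HasAlternatingCoeffs D p) (a : R) {t : ℕ}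
    (ht : t % 2 = (D + 1) % 2) : 0 ≤ (-1) ^ ((D + 1 - t) / 2) * ((X - C a) * p).coeff t := by
  rw [sub_mul, coeff_sub, coeff_C_mul, hp.coeff_eq_zero t (by omega), mul_zero, sub_zero]
  cases t with
  | zero => simp
  | succ s => rw [coeff_X_mul, show D + 1 - (s + 1) = D - s by omega]; exact hp.nonneg s

end HasAlternatingCoeffs

variable [IsStrictOrderedRing R]

theorem hasAlternatingCoeffs_prod_X_sub_C {M : Multiset R} (hM : M.map Neg.neg = M) :
    HasAlternatingCoeffs (Multiset.card M) (M.map (X - C ·)).prod := by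
  induction hn : Multiset.card M using Nat.strong_induction_on generalizing M with
  | _ n ih =>
  rcases M.empty_or_exists_mem with rfl | ⟨a, ha⟩
  · subst hn
    simpa using HasAlternatingCoeffs.one
  obtain ⟨M, rfl⟩ := Multiset.exists_cons_of_mem ha
  subst hn
  rcases Multiset.map_neg_cons_cases hM with ⟨rfl, hM'⟩ | ⟨M, rfl, hM'⟩
  · simpa using (ih _ (by simp) hM' rfl).X_mul
  · have := (ih _ (by simp) hM' rfl).X_sq_sub_C_mul (sq_nonneg a)
    rw [Multiset.map_cons, Multiset.map_cons, Multiset.prod_cons, Multiset.prod_cons, ← mul_assoc]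
    convert this using 2
    · simp
    · simp only [map_neg, C_pow]
      ring

theorem nonneg_coeff_prod_X_sub_C_of_map_neg_cons {a : R} {M : Multiset R}
    (hM : (a ::ₘ M).map Neg.neg = a ::ₘ M) {ℓ : ℕ} (hℓ : ℓ % 2 = Multiset.card M % 2) :
    0 ≤ (-1) ^ ((Multiset.card M - ℓ) / 2) * (M.map (X - C ·)).prod.coeff ℓ := by
  rcases Multiset.map_neg_cons_cases hM with ⟨-, hM'⟩ | ⟨M, rfl, hM'⟩
  · exact (hasAlternatingCoeffs_prod_X_sub_C hM').nonneg ℓ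
  · rw [Multiset.map_cons, Multiset.prod_cons, Multiset.card_cons]
    exact (hasAlternatingCoeffs_prod_X_sub_C hM').nonneg_coeff_X_sub_C_mul _ (by simpa using hℓ)

end Polynomial

namespace Lagrange

variable {F ι : Type*} [Field F] [DecidableEq ι]

theorem basis_eq_C_mul_prod (s : Finset ι) (v : ι → F) (i : ι) :
    Lagrange.basis s v i
      = C (∏ j ∈ s.erase i, (v i - v j))⁻¹ * ∏ j ∈ s.erase i, (X - C (v j)) := by
  simp only [Lagrange.basis, basisDivisor, prod_mul_distrib, ← map_prod, prod_inv_distrib]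

theorem coeff_eq_sum_eval_mul_coeff_basis {s : Finset ι} {v : ι → F} (hvs : Set.InjOn v s)
    {P : F[X]} (hP : P.degree < #s) (ℓ : ℕ) :
    P.coeff ℓ = ∑ i ∈ s, P.eval (v i) * (Lagrange.basis s v i).coeff ℓ := by
  nth_rewrite 1 [eq_interpolate hvs hP]
  simp only [interpolate_apply, finsetSum_coeff, coeff_C_mul]

end Lagrange

namespace Polynomial.Chebyshev

open Real

theorem node_sub_eq_neg {m i : ℕ} (hm : m ≠ 0) (hi : i ≤ m) : node m (m - i) = -node m i := by
  rw [node, node, Nat.cast_sub hi, ← cos_pi_sub]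
  congr 1
  field_simp

theorem map_neg_nodes {m : ℕ} (hm : m ≠ 0) :
    ((range (m + 1)).val.map (node m)).map Neg.neg = (range (m + 1)).val.map (node m) := by
  have hreflect : (range (m + 1)).image (m - ·) = range (m + 1) := by
    ext k
    simp only [mem_image, mem_range]
    exact ⟨fun ⟨j, _, hj⟩ => by omega, fun hk => ⟨m - k, by omega, by omega⟩⟩
  calc ((range (m + 1)).val.map (node m)).map Neg.neg
      = ((range (m + 1)).val.map (m - ·)).map (node m) := by
        rw [Multiset.map_map, Multiset.map_map]
        refine Multiset.map_congr rfl fun i hi => ?_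
        simp [node_sub_eq_neg hm (Nat.lt_succ_iff.mp (mem_range.mp hi))]
    _ = (range (m + 1)).val.map (node m) := by
        rw [← image_val_of_injOn (fun a ha b hb h => by simp at ha hb h; omega), hreflect]

theorem nonneg_coeff_prod_X_sub_C_node {m i ℓ : ℕ} (hi : i ≤ m) (hℓ : ℓ % 2 = m % 2) :
    0 ≤ (-1) ^ ((m - ℓ) / 2) *
      (∏ j ∈ (range (m + 1)).erase i, (X - Polynomial.C (node m j))).coeff ℓ := by
  rcases eq_or_ne m 0 with rfl | hm
  · obtain rfl : i = 0 := Nat.le_zero.mp hi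
    simp only [zero_add, range_one, erase_singleton, prod_empty, coeff_one]
    split_ifs <;> simp
  have hmem : i ∈ range (m + 1) := mem_range.mpr (Nat.lt_succ_of_le hi)
  have hcons : node m i ::ₘ ((range (m + 1)).erase i).val.map (node m)
      = (range (m + 1)).val.map (node m) := by
    rw [erase_val, ← Multiset.map_cons, Multiset.cons_erase (mem_val.mpr hmem)]
  have hcard : Multiset.card (((range (m + 1)).erase i).val.map (node m)) = m := by
    rw [Multiset.card_map, ← card_def, card_erase_of_mem hmem, card_range, Nat.add_sub_cancel]
  have := nonneg_coeff_prod_X_sub_C_of_map_neg_cons (hcons ▸ map_neg_nodes hm)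
    (ℓ := ℓ) (by rw [hcard]; exact hℓ)
  rw [hcard, Multiset.map_map] at this
  rwa [prod_eq_multiset_prod]

theorem nonneg_coeff_basis_node {m i ℓ : ℕ} (hi : i ≤ m) (hℓ : ℓ % 2 = m % 2) :
    0 ≤ (-1) ^ i * ((-1) ^ ((m - ℓ) / 2) *
      (Lagrange.basis (range (m + 1)) (node m) i).coeff ℓ) := by
  have hden : 0 < (-1) ^ i * (∏ j ∈ (range (m + 1)).erase i, (node m i - node m j))⁻¹ := by
    have := inv_pos_of_pos (zero_lt_prod_node_sub_node hi)
    rwa [mul_inv, ← inv_pow, inv_neg_one] at this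
  rw [Lagrange.basis_eq_C_mul_prod, coeff_C_mul]
  exact (mul_nonneg hden.le (nonneg_coeff_prod_X_sub_C_node hi hℓ)).trans_eq (by ring)

theorem abs_coeff_le_abs_coeff_T {m ℓ : ℕ} (hℓ : ℓ % 2 = m % 2) {P : ℝ[X]}
    (hPdeg : P.degree ≤ m) (hPbnd : ∀ x ∈ Set.Icc (-1) 1, |P.eval x| ≤ 1) :
    |P.coeff ℓ| ≤ |(T ℝ m).coeff ℓ| := by
  set ε : ℝ := (-1) ^ ((m - ℓ) / 2)
  set c : ℕ → ℝ := fun i => ε * (Lagrange.basis (range (m + 1)) (node m) i).coeff ℓ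
  have hsum : ∀ Q : ℝ[X], Q.degree ≤ m → sumNodes m c Q = ε * Q.coeff ℓ := fun Q hQ => by
    have hQ' : Q.degree < #(range (m + 1)) := by
      rw [card_range]; exact hQ.trans_lt (by exact_mod_cast Nat.lt_succ_self m)
    rw [Lagrange.coeff_eq_sum_eval_mul_coeff_basis (strictAntiOn_node m).injOn hQ', mul_sum,
      sumNodes, ← Nat.range_succ_eq_Iic]
    exact sum_congr rfl fun i _ => by ring
  have hle : ∀ Q : ℝ[X], Q.degree ≤ m → (∀ x ∈ Set.Icc (-1) 1, |Q.eval x| ≤ 1) →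
      ε * Q.coeff ℓ ≤ ε * (T ℝ m).coeff ℓ := fun Q hQ hQbnd => by
    rw [← hsum Q hQ, ← hsum _ (degree_T ℝ m).le]
    exact sumNodes_le_sumNodes_T (fun i hi => nonneg_coeff_basis_node hi hℓ) hQbnd
  have hupper := hle P hPdeg hPbnd
  have hlower := hle (-P) (by rwa [degree_neg]) (by simpa using hPbnd)
  have hε : |ε| = 1 := by simp [ε]
  calc |P.coeff ℓ| = |ε * P.coeff ℓ| := by rw [abs_mul, hε, one_mul]
    _ ≤ ε * (T ℝ m).coeff ℓ := abs_le.mpr ⟨by simp at hlower; linarith, hupper⟩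
    _ ≤ |(T ℝ m).coeff ℓ| := by
      simpa [abs_mul, hε] using le_abs_self (ε * (T ℝ m).coeff ℓ)

end Polynomial.Chebyshev

namespace Polynomial

noncomputable def parityPart (ℓ : ℕ) (P : ℝ[X]) : ℝ[X] :=
  C 2⁻¹ * (P + C ((-1) ^ ℓ) * P.comp (C (-1) * X))

theorem coeff_parityPart (ℓ : ℕ) (P : ℝ[X]) (k : ℕ) :
    (parityPart ℓ P).coeff k = if k % 2 = ℓ % 2 then P.coeff k else 0 := by
  simp only [parityPart, coeff_C_mul, coeff_add, comp_C_mul_X_coeff]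
  have hsign : (-1 : ℝ) ^ ℓ * (-1) ^ k = if k % 2 = ℓ % 2 then 1 else -1 := by
    rw [← pow_add]
    split_ifs with h
    · exact Even.neg_one_pow (Nat.even_iff.mpr (by omega))
    · exact Odd.neg_one_pow (Nat.odd_iff.mpr (by omega))
  split_ifs at hsign ⊢ <;> linear_combination 2⁻¹ * P.coeff k * hsign

theorem eval_parityPart (ℓ : ℕ) (P : ℝ[X]) (t : ℝ) :
    (parityPart ℓ P).eval t = (P.eval t + (-1) ^ ℓ * P.eval (-t)) / 2 := by
  simp only [parityPart, eval_mul, eval_C, eval_add, eval_comp, eval_X, neg_one_mul]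
  ring

theorem abs_eval_parityPart_le {ℓ : ℕ} {P : ℝ[X]} (hP : ∀ x ∈ Set.Icc (-1) 1, |P.eval x| ≤ 1)
    {t : ℝ} (ht : t ∈ Set.Icc (-1) 1) : |(parityPart ℓ P).eval t| ≤ 1 := by
  have hneg : -t ∈ Set.Icc (-1 : ℝ) 1 := ⟨by linarith [ht.2], by linarith [ht.1]⟩
  rw [eval_parityPart, abs_div, abs_two, div_le_one two_pos]
  calc |P.eval t + (-1) ^ ℓ * P.eval (-t)| ≤ |P.eval t| + |P.eval (-t)| := by
        simpa using abs_add_le (P.eval t) ((-1) ^ ℓ * P.eval (-t))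
    _ ≤ 2 := by linarith [hP t ht, hP (-t) hneg]

theorem degree_parityPart_le {d ℓ : ℕ} (hdℓ : d % 2 ≠ ℓ % 2) {P : ℝ[X]} (hP : P.degree ≤ d) :
    (parityPart ℓ P).degree ≤ (d - 1 : ℕ) := by
  refine degree_le_iff_coeff_zero _ _ |>.mpr fun k hk => ?_
  have hk : d - 1 < k := by exact_mod_cast hk
  rw [coeff_parityPart]
  split_ifs with h
  · exact coeff_eq_zero_of_degree_lt (hP.trans_lt (by exact_mod_cast (by omega : d < k)))
  · rfl

end Polynomial

theorem abs_sgn (b : Bool) : |sgn b| = 1 := by cases b <;> simp [sgn]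

section NoiseOperator

variable {n : ℕ}

-- The law of `y` when the `yᵢ` are independent and `yᵢ = xᵢ` with probability `(1 + t) / 2`.
noncomputable def noiseKernel (t : ℝ) (x y : Fin n → Bool) : ℝ :=
  ∏ i, (1 + t * sgn (x i) * sgn (y i)) / 2

theorem noiseKernel_nonneg {t : ℝ} (ht : t ∈ Set.Icc (-1) 1) (x y : Fin n → Bool) :
    0 ≤ noiseKernel t x y :=
  prod_nonneg fun i _ => by
    have : |t * sgn (x i) * sgn (y i)| ≤ 1 := by
      rw [abs_mul, abs_mul, abs_sgn, abs_sgn, mul_one, mul_one]; exact abs_le.mpr ht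
    linarith [neg_abs_le (t * sgn (x i) * sgn (y i))]

theorem sum_noiseKernel (t : ℝ) (x : Fin n → Bool) : ∑ y, noiseKernel t x y = 1 := by
  simp only [noiseKernel]
  rw [← Fintype.prod_sum fun i b => (1 + t * sgn (x i) * sgn b) / 2]
  exact prod_eq_one fun i _ => by simp [sgn]; ring

theorem sum_chi_mul_chi_mul_pow (t : ℝ) (x y : Fin n → Bool) :
    ∑ S, chi S x * chi S y * t ^ S.card = ∏ i, (1 + t * sgn (x i) * sgn (y i)) := by
  rw [prod_one_add, powerset_univ]
  refine sum_congr rfl fun S _ => ?_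
  rw [chi, chi, ← prod_const, ← prod_mul_distrib, ← prod_mul_distrib]
  exact prod_congr rfl fun i _ => by ring

noncomputable def noisePoly (f : (Fin n → Bool) → ℝ) (x : Fin n → Bool) : ℝ[X] :=
  ∑ S, C (fcoeff f S * chi S x) * X ^ S.card

theorem coeff_noisePoly (f : (Fin n → Bool) → ℝ) (x : Fin n → Bool) (ℓ : ℕ) :
    (noisePoly f x).coeff ℓ = homPart f ℓ x := by
  simp only [noisePoly, finsetSum_coeff, coeff_C_mul_X_pow, homPart, sum_filter, eq_comm]

theorem degree_noisePoly_le {d : ℕ} {f : (Fin n → Bool) → ℝ}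
    (hdeg : ∀ S : Finset (Fin n), d < S.card → fcoeff f S = 0) (x : Fin n → Bool) :
    (noisePoly f x).degree ≤ d := by
  refine (degree_sum_le _ _).trans (Finset.sup_le fun S _ => ?_)
  by_cases hS : d < S.card
  · simp [hdeg S hS]
  · exact (degree_C_mul_X_pow_le _ _).trans (by exact_mod_cast not_lt.mp hS)

theorem eval_noisePoly (f : (Fin n → Bool) → ℝ) (x : Fin n → Bool) (t : ℝ) :
    (noisePoly f x).eval t = ∑ y, f y * noiseKernel t x y := by
  simp only [noisePoly, eval_finsetSum, eval_mul, eval_C, eval_pow, eval_X, fcoeff, noiseKernel,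
    prod_div_distrib, prod_const, card_univ, Fintype.card_fin, ← sum_chi_mul_chi_mul_pow,
    sum_div, sum_mul, mul_sum]
  rw [sum_comm]
  exact sum_congr rfl fun y _ => sum_congr rfl fun S _ => by ring

theorem abs_eval_noisePoly_le {f : (Fin n → Bool) → ℝ} (hf : ∀ x, |f x| ≤ 1)
    (x : Fin n → Bool) {t : ℝ} (ht : t ∈ Set.Icc (-1) 1) : |(noisePoly f x).eval t| ≤ 1 := by
  rw [eval_noisePoly, ← sum_noiseKernel t x]
  refine (abs_sum_le_sum_abs _ _).trans (sum_le_sum fun y _ => ?_)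
  rw [abs_mul, abs_of_nonneg (noiseKernel_nonneg ht x y)]
  exact mul_le_of_le_one_left (noiseKernel_nonneg ht x y) (hf y)

end NoiseOperator

/-- If `f : {±1}^n → [-1,1]` has degree `d`, then `‖f_ℓ‖_∞ ≤ |C(d,ℓ)|` when
`d ≡ ℓ (mod 2)`, and `‖f_ℓ‖_∞ ≤ |C(d-1,ℓ)|` otherwise. -/
theorem stmt0 (n d ℓ : ℕ) (f : (Fin n → Bool) → ℝ)
    (hbdd : ∀ x, |f x| ≤ 1)
    (hdeg : ∀ S : Finset (Fin n), d < S.card → fcoeff f S = 0) :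
    ∀ x : Fin n → Bool,
      |homPart f ℓ x| ≤ if d % 2 = ℓ % 2 then |chebCoeff d ℓ| else |chebCoeff (d - 1) ℓ| := by
  intro x
  have hdegP := degree_noisePoly_le hdeg x
  have hbndP : ∀ t ∈ Set.Icc (-1) 1, |(noisePoly f x).eval t| ≤ 1 :=
    fun t ht => abs_eval_noisePoly_le hbdd x ht
  rw [← coeff_noisePoly]
  rcases lt_or_ge d ℓ with hdℓ | hℓd
  · rw [coeff_eq_zero_of_degree_lt (hdegP.trans_lt (by exact_mod_cast hdℓ)), abs_zero]
    split_ifs <;> exact abs_nonneg _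
  split_ifs with hpar
  · exact Chebyshev.abs_coeff_le_abs_coeff_T hpar.symm hdegP hbndP
  · have := Chebyshev.abs_coeff_le_abs_coeff_T (m := d - 1) (ℓ := ℓ) (by omega)
      (degree_parityPart_le hpar hdegP) (fun t ht => abs_eval_parityPart_le hbndP ht)
    rwa [coeff_parityPart, if_pos rfl] at this
end

section
/- For every positive integers n, d, ℓ with ℓ ≤ d and d ≡ ℓ (mod 2), the function f : {±1}^n → [-1,1] defined by f(x) = T_d((x_1 + ⋯ + x_n)/n) satisfies ‖f_ℓ‖_∞ ≥ |C(d,ℓ)| − 2·e^d·(d+1)!/n, where f_ℓ is the degree-ℓ homogeneous part of f. -/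
open Finset Polynomial Polynomial.Chebyshev


lemma natDegree_T_le (d : ℕ) : (T ℝ (d : ℤ)).natDegree ≤ d := by
  induction d using Nat.strong_induction_on with
  | _ d ih =>
    match d with
    | 0 => simp [T_zero]
    | 1 => simp [T_one]
    | (d+2) =>
      have h : ((d:ℤ)+2) = ((d+2 : ℕ) : ℤ) := by push_cast; ring
      have := T_add_two ℝ (d : ℤ)
      rw [h] at this
      rw [this]
      refine le_trans (natDegree_sub_le _ _) ?_
      have h1 : (2 * X * T ℝ ((d:ℤ)+1)).natDegree ≤ d + 2 := by
        refine le_trans (natDegree_mul_le) ?_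
        have : ((d:ℤ)+1) = ((d+1 : ℕ) : ℤ) := by push_cast; ring
        rw [this]
        have := ih (d+1) (by omega)
        have h2 : (2 * X : ℝ[X]).natDegree ≤ 1 := by
          refine le_trans (natDegree_mul_le) ?_
          simp
        omega
      have h2 := ih d (by omega)
      simp only [max_le_iff]
      exact ⟨h1, by omega⟩

lemma coeff_T_abs_sum_le (d : ℕ) :
    ∑ k ∈ range (d+1), |(T ℝ (d : ℤ)).coeff k| ≤ Real.exp d := by
  induction d using Nat.strong_induction_on with
  | _ d ih =>
    match d with
    | 0 => simp [T_zero, coeff_one]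
    | 1 =>
      rw [show ((1:ℕ):ℤ) = 1 from rfl, T_one]
      have : ∑ k ∈ range 2, |(X : ℝ[X]).coeff k| = 1 := by
        rw [Finset.sum_range_succ, Finset.sum_range_succ]
        simp [coeff_X]
      rw [this]
      rw [show ((1:ℕ):ℝ) = 1 by norm_num]
      nlinarith [Real.add_one_le_exp (1:ℝ)]
    | (d+2) =>
      have h : ((d:ℤ)+2) = ((d+2 : ℕ) : ℤ) := by push_cast; ring
      have hT := T_add_two ℝ (d : ℤ)
      rw [h] at hT
      have h1 : ((d:ℤ)+1) = ((d+1 : ℕ) : ℤ) := by push_cast; ring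
      rw [h1] at hT
      have key : ∀ k, (T ℝ ((d+2:ℕ) : ℤ)).coeff k =
          2 * (X * T ℝ ((d+1:ℕ) : ℤ)).coeff k - (T ℝ (d:ℤ)).coeff k := by
        intro k
        rw [hT]
        rw [coeff_sub, mul_assoc, coeff_ofNat_mul]
      calc ∑ k ∈ range (d+3), |(T ℝ ((d+2:ℕ):ℤ)).coeff k|
          ≤ ∑ k ∈ range (d+3), (2 * |(X * T ℝ ((d+1:ℕ):ℤ)).coeff k| + |(T ℝ (d:ℤ)).coeff k|) := by
            refine Finset.sum_le_sum fun k _ => ?_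
            rw [key k]
            calc |2 * (X * T ℝ ((d+1:ℕ):ℤ)).coeff k - (T ℝ (d:ℤ)).coeff k|
                ≤ |2 * (X * T ℝ ((d+1:ℕ):ℤ)).coeff k| + |(T ℝ (d:ℤ)).coeff k| := abs_sub _ _
              _ = 2 * |(X * T ℝ ((d+1:ℕ):ℤ)).coeff k| + |(T ℝ (d:ℤ)).coeff k| := by
                  rw [abs_mul]; norm_num
        _ = 2 * ∑ k ∈ range (d+3), |(X * T ℝ ((d+1:ℕ):ℤ)).coeff k|
              + ∑ k ∈ range (d+3), |(T ℝ (d:ℤ)).coeff k| := by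
            rw [Finset.sum_add_distrib, Finset.mul_sum]
        _ ≤ 2 * Real.exp (d+1) + Real.exp d := by
            have e1 : ∑ k ∈ range (d+3), |(X * T ℝ ((d+1:ℕ):ℤ)).coeff k|
                = ∑ k ∈ range (d+2), |(T ℝ ((d+1:ℕ):ℤ)).coeff k| := by
              rw [Finset.sum_range_succ']
              simp only [coeff_X_mul, coeff_mul_X]
              have : (X * T ℝ ((d+1:ℕ):ℤ)).coeff 0 = 0 := by
                rw [mul_comm, coeff_mul_X_zero]
              rw [this]
              simp
            rw [e1]
            have e2 : ∑ k ∈ range (d+3), |(T ℝ (d:ℤ)).coeff k|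
                = ∑ k ∈ range (d+1), |(T ℝ (d:ℤ)).coeff k| := by
              refine (Finset.sum_subset (by intro k hk; simp at hk ⊢; omega) ?_).symm
              intro k hk2 hk
              simp only [Finset.mem_range, not_lt] at hk
              rw [coeff_eq_zero_of_natDegree_lt (lt_of_le_of_lt (natDegree_T_le d) (by omega))]
              simp
            rw [e2]
            have i1 := ih (d+1) (by omega)
            have i2 := ih d (by omega)
            push_cast
            push_cast at i1
            nlinarith
        _ ≤ Real.exp (d+2 : ℕ) := by
            push_cast
            have h1 : Real.exp ((d:ℝ)+2) = Real.exp d * Real.exp 1 * Real.exp 1 := by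
              rw [← Real.exp_add, ← Real.exp_add]; ring_nf
            have h2 : Real.exp ((d:ℝ)+1) = Real.exp d * Real.exp 1 := by
              rw [← Real.exp_add]
            rw [h1, h2]
            have he : (2.7182818283 : ℝ) < Real.exp 1 := Real.exp_one_gt_d9
            have hd : (0:ℝ) < Real.exp d := Real.exp_pos _
            have key2 : 2 * Real.exp 1 + 1 ≤ Real.exp 1 * Real.exp 1 := by nlinarith
            nlinarith [mul_le_mul_of_nonneg_left key2 hd.le]


def fib {n k : ℕ} (g : Fin k → Fin n) (i : Fin n) : ℕ := (univ.filter (fun j => g j = i)).card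

def oddSet {n k : ℕ} (g : Fin k → Fin n) : Finset (Fin n) := univ.filter (fun i => Odd (fib g i))

lemma sum_fib {n k : ℕ} (g : Fin k → Fin n) : ∑ i, fib g i = k := by
  have := Finset.card_eq_sum_card_fiberwise (s := (univ : Finset (Fin k))) (f := g) (t := univ) (fun x _ => mem_univ _)
  simp only [Finset.card_univ, Fintype.card_fin] at this
  unfold fib
  exact this.symm

lemma oddSet_subset_image {n k : ℕ} (g : Fin k → Fin n) : oddSet g ⊆ univ.image g := by
  intro i hi
  simp only [oddSet, mem_filter] at hi
  have : fib g i ≠ 0 := by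
    intro h0
    have := hi.2
    rw [h0] at this
    simp [Nat.odd_iff] at this
  have : (univ.filter (fun j => g j = i)).Nonempty := by
    rw [Finset.nonempty_iff_ne_empty]
    intro h; apply this; unfold fib; rw [h]; simp
  obtain ⟨j, hj⟩ := this
  simp only [mem_filter] at hj
  exact mem_image.mpr ⟨j, mem_univ _, hj.2⟩

lemma card_oddSet_le {n k : ℕ} (g : Fin k → Fin n) : (oddSet g).card ≤ k := by
  calc (oddSet g).card ≤ (univ.image g).card := card_le_card (oddSet_subset_image g)
    _ ≤ (univ : Finset (Fin k)).card := card_image_le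
    _ = k := by simp

lemma injective_iff_card_oddSet {n k : ℕ} (g : Fin k → Fin n) :
    Function.Injective g ↔ (oddSet g).card = k := by
  constructor
  · intro hg
    have hfib : ∀ j : Fin k, fib g (g j) = 1 := by
      intro j
      unfold fib
      rw [Finset.card_eq_one]
      exact ⟨j, by ext j'; simp [hg.eq_iff]⟩
    have : oddSet g = univ.image g := by
      apply Finset.Subset.antisymm (oddSet_subset_image g)
      intro i hi
      obtain ⟨j, _, rfl⟩ := mem_image.mp hi
      simp only [oddSet, mem_filter]
      exact ⟨mem_univ _, by rw [hfib]; exact odd_one⟩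
    rw [this, Finset.card_image_of_injective _ hg]
    simp
  · intro hc
    have hsum := sum_fib g
    have hle : ∀ i ∈ oddSet g, 1 ≤ fib g i := by
      intro i hi
      simp only [oddSet, mem_filter] at hi
      refine Nat.one_le_iff_ne_zero.mpr fun h0 => ?_
      have := hi.2
      rw [h0] at this
      simp [Nat.odd_iff] at this
    have h1 : (oddSet g).card ≤ ∑ i ∈ oddSet g, fib g i := by
      calc (oddSet g).card = ∑ i ∈ oddSet g, 1 := by simp
        _ ≤ ∑ i ∈ oddSet g, fib g i := Finset.sum_le_sum hle
    have h2 : ∑ i ∈ oddSet g, fib g i ≤ ∑ i, fib g i :=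
      Finset.sum_le_sum_of_subset (subset_univ _)
    have heq : ∑ i ∈ oddSet g, fib g i = k := by omega
    -- every fiber has card ≤ 1
    have hall : ∀ i : Fin n, fib g i ≤ 1 := by
      intro i
      by_cases hi : i ∈ oddSet g
      · -- fibers in oddSet all equal 1
        have : ∑ i ∈ oddSet g, (fib g i - 1) = 0 := by
          have := Finset.sum_tsub_distrib (s := oddSet g) (f := fib g) (g := fun _ => 1) hle
          rw [this, heq]
          simp [hc]
        have := (Finset.sum_eq_zero_iff.mp this) i hi
        omega
      · -- fibers outside sum to zero
        have hz : ∑ i ∈ univ \ oddSet g, fib g i = 0 := by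
          have := Finset.sum_sdiff (f := fib g) (subset_univ (oddSet g))
          omega
        have := (Finset.sum_eq_zero_iff.mp hz) i (by simp [hi])
        omega
    intro j1 j2 hj
    by_contra hne
    have : 2 ≤ fib g (g j1) := by
      have : {j1, j2} ⊆ univ.filter (fun j => g j = g j1) := by
        intro j hjm
        simp only [mem_insert, mem_singleton] at hjm
        rcases hjm with rfl | rfl <;> simp [hj]
      calc 2 = ({j1, j2} : Finset (Fin k)).card := by rw [Finset.card_insert_of_notMem (by simp [hne]), Finset.card_singleton]
        _ ≤ _ := card_le_card this
    have := hall (g j1)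
    omega

lemma card_inj_eq {n k : ℕ} :
    (univ.filter (fun g : Fin k → Fin n => Function.Injective g)).card = n.descFactorial k := by
  classical
  rw [← Fintype.card_subtype]
  rw [Fintype.card_congr (Equiv.subtypeInjectiveEquivEmbedding (Fin k) (Fin n))]
  rw [Fintype.card_embedding_eq]
  simp

lemma pow_le_desc_add {n k : ℕ} : n ^ k ≤ n.descFactorial k + k * k * n ^ (k - 1) := by
  induction k with
  | zero => simp
  | succ k ih =>
    rcases Nat.eq_zero_or_pos k with rfl | hk
    · simp
    have hnk : n ^ (k+1) = n * n ^ k := by ring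
    rcases le_or_gt k n with hkn | hkn
    · have step : n * n.descFactorial k ≤ n.descFactorial (k+1) + k * n ^ k := by
        have : n * n.descFactorial k = (n - k) * n.descFactorial k + k * n.descFactorial k := by
          rw [← Nat.add_mul]; congr 1; omega
        rw [this, Nat.descFactorial_succ]
        have := Nat.descFactorial_le_pow n k
        nlinarith
      have hpow : n ^ (k-1) * n = n ^ k := by
        rw [← pow_succ]; congr 1; omega
      calc n ^ (k+1) = n * n ^ k := hnk
        _ ≤ n * (n.descFactorial k + k * k * n ^ (k-1)) := Nat.mul_le_mul_left n ih
        _ = n * n.descFactorial k + k * k * (n ^ (k-1) * n) := by ring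
        _ = n * n.descFactorial k + k * k * n ^ k := by rw [hpow]
        _ ≤ n.descFactorial (k+1) + k * n ^ k + k * k * n ^ k := by omega
        _ ≤ n.descFactorial (k+1) + (k+1) * (k+1) * n ^ (k+1-1) := by
            have : k * n ^ k + k * k * n ^ k ≤ (k+1)*(k+1) * n ^ k := by
              have : k + k * k ≤ (k+1)*(k+1) := by nlinarith
              calc k * n ^ k + k * k * n ^ k = (k + k * k) * n ^ k := by ring
                _ ≤ (k+1)*(k+1) * n ^ k := Nat.mul_le_mul_right _ this
            simp only [Nat.add_sub_cancel]
            omega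
    · have hd : n.descFactorial (k+1) = 0 := Nat.descFactorial_eq_zero_iff_lt.mpr (by omega)
      rw [hd, Nat.zero_add]
      have : n ^ (k+1) = n * n ^ k := hnk
      rw [this]
      have h1 : n * n ^ k ≤ (k+1) * (k+1) * n ^ k := by
        have : n ≤ (k+1)*(k+1) := by nlinarith
        exact Nat.mul_le_mul_right _ this
      simpa using h1

lemma orth {n : ℕ} (A S : Finset (Fin n)) :
    ∑ x : Fin n → Bool, chi A x * chi S x = if A = S then (2:ℝ)^n else 0 := by
  have key : ∀ x : Fin n → Bool, chi A x * chi S x =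
      ∏ i : Fin n, ((if i ∈ A then sgn (x i) else 1) * (if i ∈ S then sgn (x i) else 1)) := by
    intro x
    rw [Finset.prod_mul_distrib]
    unfold chi
    congr 1 <;> rw [Finset.prod_ite_mem univ, Finset.univ_inter]
  simp_rw [key]
  rw [← Fintype.prod_sum (fun (i : Fin n) (b : Bool) =>
    (if i ∈ A then sgn b else 1) * (if i ∈ S then sgn b else 1))]
  by_cases h : A = S
  · subst h
    rw [if_pos rfl]
    have : ∀ i : Fin n, (∑ b : Bool, (if i ∈ A then sgn b else 1) * (if i ∈ A then sgn b else 1)) = 2 := by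
      intro i
      rw [Fintype.sum_bool]
      by_cases hi : i ∈ A <;> simp [hi, sgn] <;> norm_num
    rw [Finset.prod_congr rfl (fun i _ => this i)]
    simp
  · rw [if_neg h]
    have : ∃ i, (i ∈ A) ≠ (i ∈ S) := by
      by_contra hc
      push_neg at hc
      exact h (Finset.ext fun i => by rw [hc i])
    obtain ⟨i₀, hi₀⟩ := this
    refine Finset.prod_eq_zero (mem_univ i₀) ?_
    rw [Fintype.sum_bool]
    by_cases h1 : i₀ ∈ A <;> by_cases h2 : i₀ ∈ S <;> simp [h1, h2, sgn] at hi₀ ⊢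

lemma sgn_pow {b : Bool} {m : ℕ} : sgn b ^ m = if Odd m then sgn b else 1 := by
  cases b <;> simp [sgn]
  · rcases Nat.even_or_odd m with hm | hm
    · rw [hm.neg_one_pow, if_neg (by simpa [Nat.not_odd_iff_even] using hm)]
    · rw [hm.neg_one_pow, if_pos hm]

lemma pow_expand {n k : ℕ} (x : Fin n → Bool) :
    (∑ i, sgn (x i)) ^ k = ∑ g : Fin k → Fin n, chi (oddSet g) x := by
  rw [Fintype.sum_pow]
  refine Finset.sum_congr rfl fun g _ => ?_
  have h1 : ∏ j : Fin k, sgn (x (g j)) = ∏ i ∈ univ.image g, sgn (x i) ^ fib g i :=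
    Finset.prod_comp (fun i => sgn (x i)) g
  have h2 : ∏ i ∈ univ.image g, sgn (x i) ^ fib g i = ∏ i : Fin n, sgn (x i) ^ fib g i := by
    refine Finset.prod_subset (subset_univ _) fun i _ hi => ?_
    have : fib g i = 0 := by
      unfold fib
      rw [Finset.card_eq_zero]
      ext j
      simp only [mem_filter, mem_univ, true_and, Finset.notMem_empty, iff_false]
      intro hj
      exact hi (mem_image.mpr ⟨j, mem_univ _, hj⟩)
    simp [this]
  rw [h1, h2]
  unfold chi oddSet
  rw [Finset.prod_filter]
  exact Finset.prod_congr rfl fun i _ => sgn_pow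

noncomputable def Ncount (n k ℓ : ℕ) : ℕ :=
  (univ.filter (fun g : Fin k → Fin n => (oddSet g).card = ℓ)).card

lemma chi_one {n : ℕ} (S : Finset (Fin n)) : chi S (fun _ => true) = 1 := by
  unfold chi sgn; simp

lemma key1 {n d : ℕ} (f : (Fin n → Bool) → ℝ)
    (hf : ∀ x, f x = (T ℝ (d : ℤ)).eval ((∑ i, sgn (x i)) / n)) (S : Finset (Fin n)) :
    (∑ x : Fin n → Bool, f x * chi S x)
      = ∑ k ∈ range (d+1), ∑ g : Fin k → Fin n,
          chebCoeff d k / (n:ℝ)^k * (if oddSet g = S then (2:ℝ)^n else 0) := by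
  have hdeg : (T ℝ (d : ℤ)).natDegree < d + 1 := Nat.lt_succ_of_le (natDegree_T_le d)
  calc ∑ x : Fin n → Bool, f x * chi S x
      = ∑ x : Fin n → Bool, ∑ k ∈ range (d+1), ∑ g : Fin k → Fin n,
          chebCoeff d k / (n:ℝ)^k * (chi (oddSet g) x * chi S x) := by
        refine Finset.sum_congr rfl fun x _ => ?_
        rw [hf x, Polynomial.eval_eq_sum_range' hdeg, Finset.sum_mul]
        refine Finset.sum_congr rfl fun k _ => ?_
        rw [div_pow, pow_expand, Finset.sum_div, Finset.mul_sum, Finset.sum_mul]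
        refine Finset.sum_congr rfl fun g _ => ?_
        unfold chebCoeff
        ring
    _ = ∑ k ∈ range (d+1), ∑ g : Fin k → Fin n, ∑ x : Fin n → Bool,
          chebCoeff d k / (n:ℝ)^k * (chi (oddSet g) x * chi S x) := by
        rw [Finset.sum_comm]
        exact Finset.sum_congr rfl fun k _ => Finset.sum_comm
    _ = ∑ k ∈ range (d+1), ∑ g : Fin k → Fin n,
          chebCoeff d k / (n:ℝ)^k * (if oddSet g = S then (2:ℝ)^n else 0) := by
        refine Finset.sum_congr rfl fun k _ => Finset.sum_congr rfl fun g _ => ?_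
        rw [← Finset.mul_sum, orth]

lemma key2 {n d ℓ : ℕ} (f : (Fin n → Bool) → ℝ)
    (hf : ∀ x, f x = (T ℝ (d : ℤ)).eval ((∑ i, sgn (x i)) / n)) :
    homPart f ℓ (fun _ => true)
      = ∑ k ∈ range (d+1), chebCoeff d k / (n:ℝ)^k * (Ncount n k ℓ : ℝ) := by
  unfold homPart
  calc ∑ S ∈ univ.filter (fun S : Finset (Fin n) => S.card = ℓ), fcoeff f S * chi S (fun _ => true)
      = ∑ S ∈ univ.filter (fun S : Finset (Fin n) => S.card = ℓ),
          ∑ k ∈ range (d+1), ∑ g : Fin k → Fin n,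
            chebCoeff d k / (n:ℝ)^k * (if oddSet g = S then (1:ℝ) else 0) := by
        refine Finset.sum_congr rfl fun S _ => ?_
        rw [chi_one, mul_one]
        unfold fcoeff
        rw [key1 f hf S, Finset.sum_div]
        refine Finset.sum_congr rfl fun k _ => ?_
        rw [Finset.sum_div]
        refine Finset.sum_congr rfl fun g _ => ?_
        by_cases h : oddSet g = S
        · rw [if_pos h, if_pos h, mul_div_assoc, div_self (by positivity : (2:ℝ)^n ≠ 0)]
        · simp [h]
    _ = ∑ k ∈ range (d+1), ∑ g : Fin k → Fin n,
          ∑ S ∈ univ.filter (fun S : Finset (Fin n) => S.card = ℓ),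
            chebCoeff d k / (n:ℝ)^k * (if oddSet g = S then (1:ℝ) else 0) := by
        rw [Finset.sum_comm]
        exact Finset.sum_congr rfl fun k _ => Finset.sum_comm
    _ = ∑ k ∈ range (d+1), ∑ g : Fin k → Fin n,
          chebCoeff d k / (n:ℝ)^k * (if (oddSet g).card = ℓ then (1:ℝ) else 0) := by
        refine Finset.sum_congr rfl fun k _ => Finset.sum_congr rfl fun g _ => ?_
        rw [← Finset.mul_sum, Finset.sum_ite_eq]
        simp
    _ = ∑ k ∈ range (d+1), chebCoeff d k / (n:ℝ)^k * (Ncount n k ℓ : ℝ) := by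
        refine Finset.sum_congr rfl fun k _ => ?_
        rw [← Finset.mul_sum, Finset.sum_boole]
        rfl

lemma Ncount_lt (n k ℓ : ℕ) (h : k < ℓ) : Ncount n k ℓ = 0 := by
  unfold Ncount
  rw [Finset.card_eq_zero, Finset.filter_eq_empty_iff]
  intro g _
  have := card_oddSet_le g
  omega

lemma Ncount_eq (n ℓ : ℕ) : Ncount n ℓ ℓ = n.descFactorial ℓ := by
  unfold Ncount
  rw [← card_inj_eq]
  congr 1
  exact Finset.filter_congr fun g _ => by rw [injective_iff_card_oddSet]

lemma Ncount_gt (n k ℓ : ℕ) (h : ℓ < k) : Ncount n k ℓ + n.descFactorial k ≤ n ^ k := by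
  have hdisj : Disjoint (univ.filter (fun g : Fin k → Fin n => (oddSet g).card = ℓ))
      (univ.filter (fun g : Fin k → Fin n => Function.Injective g)) := by
    rw [Finset.disjoint_left]
    intro g hg1 hg2
    simp only [mem_filter, mem_univ, true_and] at hg1 hg2
    rw [injective_iff_card_oddSet] at hg2
    omega
  calc Ncount n k ℓ + n.descFactorial k
      = ((univ.filter (fun g : Fin k → Fin n => (oddSet g).card = ℓ)) ∪
          (univ.filter (fun g => Function.Injective g))).card := by
        rw [Finset.card_union_of_disjoint hdisj, Ncount, card_inj_eq]
    _ ≤ (univ : Finset (Fin k → Fin n)).card := Finset.card_le_card (Finset.subset_univ _)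
    _ = n ^ k := by simp [Fintype.card_fun]

lemma ratio_est (n k ℓ d : ℕ) (hn : 0 < n) (hℓ : 0 < ℓ) (hld : ℓ ≤ d) (hk : k ≤ d) :
    |(Ncount n k ℓ : ℝ) / (n:ℝ)^k - (if k = ℓ then 1 else 0)| ≤ (d:ℝ)^2 / n := by
  have hnR : (0:ℝ) < (n:ℝ) := by exact_mod_cast hn
  have hnk : (0:ℝ) < (n:ℝ)^k := by positivity
  rcases lt_trichotomy k ℓ with h | h | h
  · rw [Ncount_lt n k ℓ h, if_neg (by omega)]
    simp only [Nat.cast_zero, zero_div, sub_zero, abs_zero]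
    positivity
  · subst h
    rw [if_pos rfl, Ncount_eq]
    have h1 : (n.descFactorial k : ℝ) ≤ (n:ℝ)^k := by
      exact_mod_cast Nat.descFactorial_le_pow n k
    have h2 : (n:ℝ)^k ≤ (n.descFactorial k : ℝ) + (k:ℝ)*k*(n:ℝ)^(k-1) := by
      exact_mod_cast pow_le_desc_add (n := n) (k := k)
    have hpow : (n:ℝ)^(k-1) * n = (n:ℝ)^k := by
      rw [← pow_succ]; congr 1; omega
    rw [abs_sub_comm, abs_of_nonneg, sub_le_iff_le_add]
    · rw [div_add_div _ _ (ne_of_gt hnR) (ne_of_gt hnk), le_div_iff₀ (by positivity)]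
      have hkd : (k:ℝ) ≤ d := by exact_mod_cast hk
      have hk0 : (0:ℝ) ≤ k := Nat.cast_nonneg k
      have hmul : (n:ℝ) * ((n:ℝ)^k) ≤ (n:ℝ) * ((n.descFactorial k : ℝ) + (k:ℝ)*k*(n:ℝ)^(k-1)) :=
        mul_le_mul_of_nonneg_left h2 hnR.le
      have hkk : (k:ℝ)*k*(n:ℝ)^(k-1)*(n:ℝ) = (k:ℝ)*k*(n:ℝ)^k := by
        rw [mul_assoc ((k:ℝ)*k), hpow]
      have hnkpos : (0:ℝ) ≤ (n:ℝ)^k := hnk.le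
      nlinarith [mul_le_mul_of_nonneg_right (mul_le_mul hkd hkd hk0 (le_trans hk0 hkd)) hnkpos]
    · rw [sub_nonneg, div_le_one hnk]
      exact h1
  · rw [if_neg (by omega)]
    have h0 : (0:ℝ) ≤ (Ncount n k ℓ : ℝ) / (n:ℝ)^k := by positivity
    rw [sub_zero, abs_of_nonneg h0]
    have hkk : 0 < k := by omega
    have h1 : (Ncount n k ℓ : ℝ) ≤ (k:ℝ)*k*(n:ℝ)^(k-1) := by
      have := Ncount_gt n k ℓ h
      have := pow_le_desc_add (n := n) (k := k)
      have : Ncount n k ℓ ≤ k * k * n ^ (k-1) := by omega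
      exact_mod_cast this
    have hpow : (n:ℝ)^(k-1) * n = (n:ℝ)^k := by
      rw [← pow_succ]; congr 1; omega
    rw [div_le_div_iff₀ hnk hnR]
    calc (Ncount n k ℓ:ℝ) * n ≤ (k:ℝ)*k*(n:ℝ)^(k-1) * n := by
          apply mul_le_mul_of_nonneg_right h1 hnR.le
      _ = (k:ℝ)^2 * (n:ℝ)^k := by rw [mul_assoc, hpow]; ring
      _ ≤ (d:ℝ)^2 * (n:ℝ)^k := by
          apply mul_le_mul_of_nonneg_right _ (by positivity)
          have : (k:ℝ) ≤ d := by exact_mod_cast hk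
          nlinarith [Nat.cast_nonneg (α := ℝ) k]

/-- For positive integers `n, d, ℓ` with `ℓ ≤ d` and `d ≡ ℓ (mod 2)`, the function
`f(x) = T_d((x_1 + ⋯ + x_n)/n)` on `{±1}^n` satisfies
`‖f_ℓ‖_∞ ≥ |C(d,ℓ)| − 2 e^d (d+1)!/n`. -/
theorem stmt3 (n d ℓ : ℕ) (hn : 0 < n) (hd : 0 < d) (hℓ : 0 < ℓ)
    (hld : ℓ ≤ d) (hpar : d % 2 = ℓ % 2)
    (f : (Fin n → Bool) → ℝ)
    (hf : ∀ x, f x = (Polynomial.Chebyshev.T ℝ (d : ℤ)).eval ((∑ i, sgn (x i)) / n)) :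
    |chebCoeff d ℓ| - 2 * Real.exp d * (Nat.factorial (d + 1)) / n ≤
      Finset.univ.sup' Finset.univ_nonempty (fun x : Fin n → Bool => |homPart f ℓ x|) := by
  have hnR : (0:ℝ) < (n:ℝ) := by exact_mod_cast hn
  set one : Fin n → Bool := fun _ => true with hone
  -- the value at the all-ones point
  have hval := key2 f hf (ℓ := ℓ)
  -- chebCoeff d ℓ as a delta-sum
  have hcheb : chebCoeff d ℓ = ∑ k ∈ range (d+1), chebCoeff d k * (if k = ℓ then 1 else 0) := by
    rw [Finset.sum_congr rfl (fun k _ => by rw [mul_ite, mul_one, mul_zero])]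
    rw [Finset.sum_ite_eq' (range (d+1)) ℓ (fun k => chebCoeff d k)]
    rw [if_pos (by simp; omega)]
  -- the error bound
  have herr : |homPart f ℓ one - chebCoeff d ℓ| ≤ Real.exp d * (d:ℝ)^2 / n := by
    rw [hval, hcheb, ← Finset.sum_sub_distrib]
    calc |∑ k ∈ range (d+1), (chebCoeff d k / (n:ℝ)^k * (Ncount n k ℓ : ℝ)
            - chebCoeff d k * (if k = ℓ then 1 else 0))|
        ≤ ∑ k ∈ range (d+1), |chebCoeff d k / (n:ℝ)^k * (Ncount n k ℓ : ℝ)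
            - chebCoeff d k * (if k = ℓ then 1 else 0)| := Finset.abs_sum_le_sum_abs _ _
      _ ≤ ∑ k ∈ range (d+1), |chebCoeff d k| * ((d:ℝ)^2 / n) := by
          refine Finset.sum_le_sum fun k hk => ?_
          have hkd : k ≤ d := by simp at hk; omega
          have : chebCoeff d k / (n:ℝ)^k * (Ncount n k ℓ : ℝ)
              - chebCoeff d k * (if k = ℓ then 1 else 0)
              = chebCoeff d k * ((Ncount n k ℓ : ℝ) / (n:ℝ)^k - (if k = ℓ then 1 else 0)) := by
            ring
          rw [this, abs_mul]
          exact mul_le_mul_of_nonneg_left (ratio_est n k ℓ d hn hℓ hld hkd) (abs_nonneg _)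
      _ = (∑ k ∈ range (d+1), |chebCoeff d k|) * ((d:ℝ)^2 / n) := by
          rw [Finset.sum_mul]
      _ ≤ Real.exp d * ((d:ℝ)^2 / n) := by
          refine mul_le_mul_of_nonneg_right (coeff_T_abs_sum_le d) (by positivity)
      _ = Real.exp d * (d:ℝ)^2 / n := by ring
  -- factorial bound : d^2 ≤ 2 * (d+1)!
  have hfact : (d:ℝ)^2 ≤ 2 * (Nat.factorial (d+1) : ℝ) := by
    have h1 : d * d ≤ (d+1) * d := by nlinarith
    have h2 : d ≤ Nat.factorial d := Nat.self_le_factorial d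
    have h3 : d * d ≤ Nat.factorial (d+1) := by
      calc d * d ≤ (d+1) * d := h1
        _ ≤ (d+1) * Nat.factorial d := Nat.mul_le_mul_left _ h2
        _ = Nat.factorial (d+1) := (Nat.factorial_succ d).symm
    have : (d:ℝ) * d ≤ (Nat.factorial (d+1) : ℝ) := by exact_mod_cast h3
    nlinarith [Nat.cast_nonneg (α := ℝ) (Nat.factorial (d+1))]
  have herr2 : |homPart f ℓ one - chebCoeff d ℓ|
      ≤ 2 * Real.exp d * (Nat.factorial (d+1) : ℝ) / n := by
    refine herr.trans ?_
    rw [div_le_div_iff₀ hnR hnR]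
    have he : (0:ℝ) < Real.exp d := Real.exp_pos _
    nlinarith [mul_le_mul_of_nonneg_left hfact he.le]
  -- conclude
  have hsup : |homPart f ℓ one| ≤
      Finset.univ.sup' Finset.univ_nonempty (fun x : Fin n → Bool => |homPart f ℓ x|) :=
    Finset.le_sup' (fun x : Fin n → Bool => |homPart f ℓ x|) (mem_univ one)
  have htri : |chebCoeff d ℓ| - |homPart f ℓ one - chebCoeff d ℓ| ≤ |homPart f ℓ one| := by
    have := abs_sub_abs_le_abs_sub (chebCoeff d ℓ) (homPart f ℓ one)
    rw [abs_sub_comm] at this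
    linarith
  linarith
end

section
/- Let d ≥ ℓ ≥ 0 be integers. Let θ be a random variable with values in ℝ and φ a function such that φ(θ) is integrable, E[φ(θ)·cos^ℓ(θ)] = 1, and E[φ(θ)·cos^k(θ)] = 0 for all integers 0 ≤ k ≤ d with k ≠ ℓ. Then E[|φ(θ)|] ≥ |C(d,ℓ)|, where C(d,ℓ) is the coefficient of z^ℓ in the degree-d Chebyshev polynomial T_d. -/
/-!
Expanding `T_d` in monomials, the moment conditions give `E[φ(θ) T_d(cos θ)] = C(d, ℓ)`.
Since `T_d(cos θ) = cos (d θ)` has absolute value at most `1`, this expectation is bounded by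
`E[|φ(θ)|]`.
-/

open MeasureTheory

open Polynomial Real

section

variable {α : Type*} [MeasurableSpace α] {μ : Measure α} {φ : α → ℝ}

lemma abs_integral_mul_le_integral_abs {g : α → ℝ} (hφ : Integrable φ μ)
    (hg : AEStronglyMeasurable g μ) (hg_le : ∀ x, |g x| ≤ 1) :
    |∫ x, φ x * g x ∂μ| ≤ ∫ x, |φ x| ∂μ :=
  calc |∫ x, φ x * g x ∂μ| ≤ ∫ x, |φ x * g x| ∂μ := abs_integral_le_integral_abs
    _ ≤ ∫ x, |φ x| ∂μ := by
      refine integral_mono (hφ.mul_bdd hg (c := 1) (ae_of_all _ hg_le)).abs hφ.abs fun x => ?_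
      rw [abs_mul]
      exact mul_le_of_le_one_right (abs_nonneg _) (hg_le x)

end

section

variable {μ : Measure ℝ} {φ : ℝ → ℝ}

lemma MeasureTheory.Integrable.mul_cos_pow (hφ : Integrable φ μ) (k : ℕ) :
    Integrable (fun θ => φ θ * cos θ ^ k) μ :=
  hφ.mul_bdd (c := 1) (by fun_prop) <| ae_of_all _ fun θ => by
    simpa only [norm_pow, norm_eq_abs] using pow_le_one₀ (abs_nonneg _) (abs_cos_le_one θ)

theorem integral_mul_eval_cos_eq_coeff {d ℓ : ℕ} (p : ℝ[X]) (hp : p.natDegree ≤ d)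
    (hφ : Integrable φ μ) (hl : ∫ θ, φ θ * cos θ ^ ℓ ∂μ = 1)
    (h0 : ∀ k ≤ d, k ≠ ℓ → ∫ θ, φ θ * cos θ ^ k ∂μ = 0) :
    ∫ θ, φ θ * p.eval (cos θ) ∂μ = p.coeff ℓ := by
  have hp' : p.natDegree < d + 1 := Nat.lt_succ_of_le hp
  calc ∫ θ, φ θ * p.eval (cos θ) ∂μ
      = ∑ k ∈ Finset.range (d + 1), p.coeff k * ∫ θ, φ θ * cos θ ^ k ∂μ := by
        have hexpand : ∀ θ, φ θ * p.eval (cos θ) =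
            ∑ k ∈ Finset.range (d + 1), p.coeff k * (φ θ * cos θ ^ k) := fun θ => by
          rw [eval_eq_sum_range' hp', Finset.mul_sum]
          exact Finset.sum_congr rfl fun k _ => by ring
        simp_rw [hexpand]
        rw [integral_finsetSum _ fun k _ => (hφ.mul_cos_pow k).const_mul _]
        exact Finset.sum_congr rfl fun k _ => integral_const_mul _ _
    _ = ∑ k ∈ Finset.range (d + 1), if k = ℓ then p.coeff ℓ else 0 := by
        refine Finset.sum_congr rfl fun k hk => ?_
        split_ifs with hkl
        · rw [hkl, hl, mul_one]
        · rw [h0 k (Finset.mem_range_succ_iff.mp hk) hkl, mul_zero]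
    _ = p.coeff ℓ := by
        rw [Finset.sum_ite_eq']
        split_ifs with hℓ
        · rfl
        · exact (coeff_eq_zero_of_natDegree_lt (hp.trans_lt (by simpa using hℓ))).symm

end

theorem stmt8_general (d ℓ : ℕ)
    (μ : Measure ℝ) (φ : ℝ → ℝ)
    (hint : Integrable φ μ)
    (hl : ∫ θ, φ θ * Real.cos θ ^ ℓ ∂μ = 1)
    (h0 : ∀ k : ℕ, k ≤ d → k ≠ ℓ → ∫ θ, φ θ * Real.cos θ ^ k ∂μ = 0) :
    |chebCoeff d ℓ| ≤ ∫ θ, |φ θ| ∂μ := by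
  have hdeg : (Chebyshev.T ℝ d).natDegree ≤ d := by simp [Chebyshev.natDegree_T]
  rw [chebCoeff, ← integral_mul_eval_cos_eq_coeff _ hdeg hint hl h0]
  refine abs_integral_mul_le_integral_abs hint (by fun_prop) fun θ => ?_
  rw [Chebyshev.T_real_cos]
  exact abs_cos_le_one _

/-- Optimality of the filter: if `θ` is a real random variable (with distribution `μ`)
and `φ` is a function with `φ(θ)` integrable, `E[φ(θ) cos^ℓ(θ)] = 1`, and
`E[φ(θ) cos^k(θ)] = 0` for all `0 ≤ k ≤ d` with `k ≠ ℓ`, then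
`E[|φ(θ)|] ≥ |C(d,ℓ)|`. -/
theorem stmt8 (d ℓ : ℕ) (hld : ℓ ≤ d)
    (μ : Measure ℝ) [IsProbabilityMeasure μ] (φ : ℝ → ℝ)
    (hint : Integrable φ μ)
    (hl : ∫ θ, φ θ * Real.cos θ ^ ℓ ∂μ = 1)
    (h0 : ∀ k : ℕ, k ≤ d → k ≠ ℓ → ∫ θ, φ θ * Real.cos θ ^ k ∂μ = 0) :
    |chebCoeff d ℓ| ≤ ∫ θ, |φ θ| ∂μ :=
  stmt8_general d ℓ μ φ hint hl h0
end

section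
/- Let p(z) = Σ_{j=0}^d c_j z^j be a real polynomial of degree d all of whose roots are real and positive. Then for every root r of p and every k ∈ {0, 1, …, d}, one has (−1)^{d−k−1} · p_{>k}(r) ≥ 0, where p_{>k}(z) = Σ_{j=k+1}^d c_j z^j. -/
open Polynomial

lemma coeff_prod_zero {ι : Type*} (r : ι → ℝ) (s : Finset ι) {n : ℕ} (hn : s.card < n) :
    (∏ j ∈ s, (X - C (r j))).coeff n = 0 := by
  apply coeff_eq_zero_of_natDegree_lt
  calc (∏ j ∈ s, (X - C (r j))).natDegree
      ≤ ∑ j ∈ s, (X - C (r j)).natDegree := natDegree_prod_le _ _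
    _ ≤ s.card := by simp [natDegree_X_sub_C]
    _ < n := hn

lemma sign_coeff {ι : Type*} [DecidableEq ι] (r : ι → ℝ) (hr : ∀ j, 0 ≤ r j) (s : Finset ι) :
    ∀ k, 0 ≤ (-1 : ℝ) ^ (s.card - k) * (∏ j ∈ s, (X - C (r j))).coeff k := by
  induction s using Finset.induction with
  | empty =>
      intro k
      rcases Nat.eq_zero_or_pos k with h | h
      · subst h; simp
      · simp [coeff_one, Nat.pos_iff_ne_zero.mp h]
  | @insert a s ha ih =>
      intro k
      rw [Finset.prod_insert ha, Finset.card_insert_of_notMem ha]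
      have hco : ((X - C (r a)) * ∏ j ∈ s, (X - C (r j))).coeff k
          = (X * ∏ j ∈ s, (X - C (r j))).coeff k
            - r a * (∏ j ∈ s, (X - C (r j))).coeff k := by
        rw [sub_mul, coeff_sub, coeff_C_mul]
      rw [hco]
      rcases k with _ | m
      · have h := mul_nonneg (hr a) (ih 0)
        simp only [Nat.sub_zero] at h ⊢
        rw [coeff_X_mul_zero, zero_sub, pow_succ]
        nlinarith [h]
      · rw [coeff_X_mul]
        rcases le_or_gt (m + 1) s.card with hm | hm
        · have he1 : s.card + 1 - (m + 1) = (s.card - m) := by omega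
          have he2 : s.card - m = (s.card - (m+1)) + 1 := by omega
          rw [he1, he2, pow_succ]
          have h1 := ih m
          rw [he2, pow_succ] at h1
          have h2 := mul_nonneg (hr a) (ih (m+1))
          nlinarith [h1, h2]
        · have h0 : (∏ j ∈ s, (X - C (r j))).coeff (m+1) = 0 :=
            coeff_prod_zero r s hm
          rw [h0, mul_zero, sub_zero]
          have he1 : s.card + 1 - (m + 1) = s.card - m := by omega
          rw [he1]
          exact ih m

lemma tele (q : Polynomial ℝ) (x : ℝ) (d : ℕ) (hq : q.coeff d = 0) :
    ∀ n k, k + n = d →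
      ∑ j ∈ Finset.Icc (k + 1) d, ((X - C x) * q).coeff j * x ^ j
        = x ^ (k + 1) * q.coeff k := by
  intro n
  induction n with
  | zero =>
      intro k hkd
      obtain rfl : k = d := by omega
      rw [Finset.Icc_eq_empty (by omega), Finset.sum_empty, hq, mul_zero]
  | succ n ih =>
      intro k hkd
      have hkd' : k + 1 ≤ d := by omega
      have hsplit : Finset.Icc (k + 1) d = insert (k + 1) (Finset.Icc (k + 2) d) := by
        ext j
        simp only [Finset.mem_Icc, Finset.mem_insert]
        omega
      rw [hsplit, Finset.sum_insert (by simp), ih (k + 1) (by omega)]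
      have hco : ((X - C x) * q).coeff (k + 1) = q.coeff k - x * q.coeff (k + 1) := by
        rw [sub_mul, coeff_sub, coeff_X_mul, coeff_C_mul]
      rw [hco]
      ring

/-- If `p(z) = Σ_{j=0}^d c_j z^j` is a real polynomial of degree `d` all of whose roots
are real and positive (i.e. `p = c · ∏_{j=1}^d (z − r_j)` with `r_j > 0`), then for every
root `x` of `p` and every `k ∈ {0,…,d}`, `(−1)^{d−k−1} · p_{>k}(x) ≥ 0`, where
`p_{>k}(z) = Σ_{j=k+1}^d c_j z^j`. -/
theorem stmt9 (d : ℕ) (p : Polynomial ℝ) (c : ℝ) (hc : 0 < c) (r : Fin d → ℝ)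
    (hr : ∀ j, 0 < r j)
    (hp : p = C c * ∏ j : Fin d, (X - C (r j)))
    (x : ℝ) (hx : p.eval x = 0) (k : ℕ) (hk : k ≤ d) :
    0 ≤ (-1 : ℝ) ^ (d - k - 1) * ∑ j ∈ Finset.Icc (k + 1) d, p.coeff j * x ^ j := by
  have hc' : c ≠ 0 := ne_of_gt hc
  have hprod : ∏ j : Fin d, (x - r j) = 0 := by
    rw [hp] at hx
    simpa [eval_prod, hc'] using hx
  obtain ⟨i, -, hi⟩ := Finset.prod_eq_zero_iff.mp hprod
  have hxi : x = r i := by linarith [sub_eq_zero.mp hi]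
  have hxpos : 0 < x := hxi ▸ hr i
  set s : Finset (Fin d) := Finset.univ.erase i with hs
  set q : Polynomial ℝ := C c * ∏ j ∈ s, (X - C (r j)) with hq
  have hfac : p = (X - C x) * q := by
    rw [hp, hq, hxi, ← Finset.mul_prod_erase _ _ (Finset.mem_univ i)]
    ring
  have hd1 : 1 ≤ d := i.pos
  have hcard : s.card = d - 1 := by
    rw [hs, Finset.card_erase_of_mem (Finset.mem_univ i)]
    simp
  have hqd : q.coeff d = 0 := by
    rw [hq, coeff_C_mul, coeff_prod_zero r s (by omega), mul_zero]
  have hsum := tele q x d hqd (d - k) k (by omega)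
  rw [hfac] at hx ⊢
  rw [hsum, hq, coeff_C_mul]
  have key : 0 ≤ (-1 : ℝ) ^ (d - k - 1) * (∏ j ∈ s, (X - C (r j))).coeff k := by
    have h := sign_coeff r (fun j => (hr j).le) s k
    rwa [hcard, (by omega : d - 1 - k = d - k - 1)] at h
  have heq : (-1 : ℝ) ^ (d - k - 1) * (x ^ (k + 1) * (c * (∏ j ∈ s, (X - C (r j))).coeff k))
      = (x ^ (k + 1) * c) * ((-1 : ℝ) ^ (d - k - 1) * (∏ j ∈ s, (X - C (r j))).coeff k) := by
    ring
  rw [heq]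
  exact mul_nonneg (mul_nonneg (pow_pos hxpos _).le hc.le) key
end

section
/- Let d ≥ 1 and let θ be uniformly distributed over the 2d equally spaced angles {jπ/d : j = 0, 1, …, 2d−1}. Then for every integer k ≥ 0: E[cos(dθ)·cos^k(θ)] = 0 if k ≢ d (mod 2); E[cos(dθ)·cos^k(θ)] = 0 if k < d; and E[cos(dθ)·cos^d(θ)] = 2^{−(d−1)}. -/
/-!
With `ζ = exp(iπ/d)`, a primitive `2d`-th root of unity, the angle `θ_j = jπ/d` has
`e^{iθ_j} = ζ^j` and `cos(dθ_j) = (-1)^j = ζ^{dj}`. Expanding `cos^k θ = 2^{-k}(e^{iθ} + e^{-iθ})^k`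
binomially turns the average into `2^{-k} ∑_m C(k,m) · (1/2d) ∑_j ζ^{(2m+d-k)j}`, and the inner
geometric sum is `1` or `0` according as `2d ∣ 2m+d-k`. For `k ≢ d (mod 2)` or `k < d` no `m ≤ k`
qualifies; for `k = d` exactly `m = 0` and `m = d` do, giving `2 · 2^{-d}`.
-/

open Finset

theorem IsPrimitiveRoot.geom_sum_zpow_eq_ite {K : Type*} [Field K] {ζ : K} {n : ℕ}
    (hζ : IsPrimitiveRoot ζ n) (e : ℤ) :
    ∑ j ∈ range n, (ζ ^ e) ^ j = if (n : ℤ) ∣ e then (n : K) else 0 := by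
  split_ifs with h
  · simp [(hζ.zpow_eq_one_iff_dvd e).mpr h]
  · have hn : (ζ ^ e) ^ n = 1 := by
      rw [← zpow_natCast, ← zpow_mul, mul_comm, zpow_mul, zpow_natCast, hζ.pow_eq_one, one_zpow]
    rw [geom_sum_eq (mt (hζ.zpow_eq_one_iff_dvd e).mp h), hn, sub_self, zero_div]

theorem Complex.cos_pow_eq_sum_choose (z : ℂ) (k : ℕ) :
    Complex.cos z ^ k =
      (∑ m ∈ range (k + 1), (k.choose m : ℂ) * Complex.exp (z * Complex.I) ^ (2 * m - k : ℤ)) /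
        2 ^ k := by
  rw [Complex.cos, neg_mul, Complex.exp_neg, div_pow, add_pow]
  congr 1
  refine sum_congr rfl fun m hm => ?_
  have hmk : m ≤ k := Nat.lt_succ_iff.mp (mem_range.mp hm)
  rw [mul_comm, ← zpow_natCast, ← zpow_natCast, inv_zpow', ← zpow_add₀ (Complex.exp_ne_zero _)]
  push_cast [hmk]
  ring_nf

theorem sum_neg_one_pow_mul_cos_pow {d : ℕ} (hd : d ≠ 0) (k : ℕ) :
    ∑ j ∈ range (2 * d), (-1) ^ j * Complex.cos (j * Real.pi / d) ^ k =
      (∑ m ∈ range (k + 1), (k.choose m : ℂ) *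
        if ((2 * d : ℕ) : ℤ) ∣ 2 * (m : ℤ) + d - k then ((2 * d : ℕ) : ℂ) else 0) / 2 ^ k := by
  set ζ := Complex.exp (2 * Real.pi * Complex.I / (2 * d : ℕ))
  have hζ : IsPrimitiveRoot ζ (2 * d) := Complex.isPrimitiveRoot_exp _ (by omega)
  have hζd : ζ ^ (d : ℤ) = -1 := by
    rw [zpow_natCast, ← Complex.exp_nat_mul, ← Complex.exp_pi_mul_I]
    congr 1; push_cast; field_simp
  have hexp (j : ℕ) : Complex.exp ((j * Real.pi / d) * Complex.I) = ζ ^ (j : ℤ) := by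
    rw [zpow_natCast, ← Complex.exp_nat_mul]
    congr 1; push_cast; field_simp
  clear_value ζ
  have hterm (j m : ℕ) :
      ((-1) ^ j * (ζ ^ (j : ℤ)) ^ (2 * m - k : ℤ) : ℂ) = (ζ ^ (2 * (m : ℤ) + d - k)) ^ j := by
    rw [← hζd, ← zpow_natCast, ← zpow_natCast, ← zpow_mul, ← zpow_mul, ← zpow_mul,
      ← zpow_add₀ (hζ.ne_zero (by omega))]
    ring_nf
  simp_rw [Complex.cos_pow_eq_sum_choose, hexp, mul_div_assoc', mul_sum, ← sum_div]
  rw [sum_comm]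
  congr 1
  refine sum_congr rfl fun m _ => ?_
  rw [← hζ.geom_sum_zpow_eq_ite, mul_sum]
  refine sum_congr rfl fun j _ => ?_
  rw [← hterm]
  ring

theorem sum_cos_mul_cos_pow_div_eq_sum_choose {d : ℕ} (hd : d ≠ 0) (k : ℕ) :
    (∑ j ∈ range (2 * d), Real.cos (d * (j * Real.pi / d)) * Real.cos (j * Real.pi / d) ^ k) /
        (2 * d) =
      (∑ m ∈ range (k + 1) with (2 * d : ℤ) ∣ 2 * ((m : ℕ) : ℤ) + d - k, (k.choose m : ℝ)) /
        2 ^ k := by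
  have hsign (j : ℕ) : Real.cos (d * (j * Real.pi / d)) = (-1) ^ j := by
    rw [mul_div_cancel₀ _ (by exact_mod_cast hd), Real.cos_nat_mul_pi]
  apply Complex.ofReal_injective
  simp_rw [hsign]
  push_cast [sum_neg_one_pow_mul_cos_pow hd, sum_filter]
  rw [div_right_comm, sum_div]
  congr 1
  refine sum_congr rfl fun m _ => ?_
  split_ifs
  · push_cast
    field_simp
  · simp

/-- Moments of `cos(dθ)·cos^k(θ)` for `θ` uniform on the `2d` equally spaced angles
`{jπ/d : j = 0,…,2d−1}`: the expectation vanishes when `k ≢ d (mod 2)` or `k < d`, and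
equals `2^{−(d−1)}` when `k = d`. -/
theorem stmt11 (d : ℕ) (hd : 1 ≤ d) (k : ℕ) :
    (k % 2 ≠ d % 2 →
      (∑ j ∈ Finset.range (2 * d),
          Real.cos (d * (j * Real.pi / d)) * Real.cos (j * Real.pi / d) ^ k) / (2 * d) = 0) ∧
    (k < d →
      (∑ j ∈ Finset.range (2 * d),
          Real.cos (d * (j * Real.pi / d)) * Real.cos (j * Real.pi / d) ^ k) / (2 * d) = 0) ∧
    ((∑ j ∈ Finset.range (2 * d),
        Real.cos (d * (j * Real.pi / d)) * Real.cos (j * Real.pi / d) ^ d) / (2 * d) =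
      (2 : ℝ) ^ (-((d : ℝ) - 1))) := by
  simp only [sum_cos_mul_cos_pow_div_eq_sum_choose (Nat.one_le_iff_ne_zero.mp hd)]
  refine ⟨fun hparity => ?_, fun hkd => ?_, ?_⟩
  · rw [filter_false_of_mem fun m _ h => ?_, sum_empty, zero_div]
    have : (2 : ℤ) ∣ 2 * m + d - k := (dvd_mul_right 2 (d : ℤ)).trans h
    omega
  · rw [filter_false_of_mem fun m hm h => ?_, sum_empty, zero_div]
    have := Int.le_of_dvd (by omega) h
    have := mem_range.mp hm
    omega
  · have hsupport : (range (d + 1)).filter (fun m : ℕ => (2 * d : ℤ) ∣ 2 * m + d - d) = {0, d} := by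
      ext m
      simp only [mem_filter, mem_range, mem_insert, mem_singleton, add_sub_cancel_right]
      constructor
      · rintro ⟨hm, h⟩
        rcases Nat.eq_zero_or_pos m with rfl | hpos
        · exact Or.inl rfl
        · have := Int.le_of_dvd (by omega) h
          omega
      · rintro (rfl | rfl) <;> simp
    obtain ⟨n, rfl⟩ := Nat.exists_eq_add_of_le' hd
    rw [hsupport, sum_pair (by omega), Nat.choose_zero_right, Nat.choose_self,
      Real.rpow_neg zero_le_two]
    push_cast
    rw [add_sub_cancel_right, Real.rpow_natCast, pow_succ]
    field_simp
    norm_num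
end

section
/- Let a_0, a_1, …, a_d be a unimodal sequence of positive real numbers (i.e., there exists an index m with a_0 ≤ a_1 ≤ ⋯ ≤ a_m ≥ a_{m+1} ≥ ⋯ ≥ a_d) such that Σ_{j=0}^d (−1)^j a_j = 0. Then for every k ∈ {0, 1, …, d}, one has (−1)^k · Σ_{j=0}^k (−1)^j a_j ≥ 0. -/
/-!
Multiplying the partial sum by `(-1)^k` turns it into an alternating sum that starts with a
nonnegative term. If `k` lies on the increasing side of the mode, reverse the order of summation:
`a_k - a_{k-1} + a_{k-2} - ⋯` is an alternating sum of a nonincreasing nonnegative sequence. If `k`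
lies on the decreasing side, the vanishing of the full sum rewrites the partial sum as minus the
tail, and `a_{k+1} - a_{k+2} + ⋯ ± a_d` is again such an alternating sum. Alternating sums of
nonincreasing nonnegative sequences are nonnegative, by pairing consecutive terms.
-/

open Finset

theorem sum_range_neg_one_pow_mul_nonneg_of_antitoneOn {b : ℕ → ℝ} {n : ℕ}
    (hb : ∀ t < n, 0 ≤ b t) (hanti : AntitoneOn b (Set.Iio n)) :
    0 ≤ ∑ t ∈ range n, (-1 : ℝ) ^ t * b t := by
  induction n using Nat.twoStepInduction generalizing b with
  | zero => simp
  | one => simpa using hb 0 one_pos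
  | more n ih _ =>
    have hpair : 0 ≤ b 0 - b 1 :=
      sub_nonneg.2 <| hanti (by simp) (by simp) zero_le_one
    have htail : 0 ≤ ∑ t ∈ range n, (-1 : ℝ) ^ t * b (t + 2) :=
      ih (fun t ht => hb _ (by omega)) fun i hi j hj hij =>
        hanti (by simp at hi ⊢; omega) (by simp at hj ⊢; omega) (by omega)
    have hsplit : ∑ t ∈ range (n + 2), (-1 : ℝ) ^ t * b t
        = (b 0 - b 1) + ∑ t ∈ range n, (-1 : ℝ) ^ t * b (t + 2) := by
      simp only [sum_range_succ' _ (n + 1), sum_range_succ' _ n, pow_succ]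
      ring_nf
    rw [hsplit]
    exact add_nonneg hpair htail

section NegOnePow

variable {R : Type*} [CommRing R]

theorem neg_one_pow_mul_neg_one_pow_self (n : ℕ) : (-1 : R) ^ n * (-1) ^ n = 1 := by
  rw [← pow_add, Even.neg_one_pow ⟨n, rfl⟩]

theorem neg_one_pow_mul_sum_range_succ_eq_reflect (a : ℕ → R) (k : ℕ) :
    (-1 : R) ^ k * ∑ j ∈ range (k + 1), (-1) ^ j * a j
      = ∑ t ∈ range (k + 1), (-1) ^ t * a (k - t) := by
  rw [mul_sum, ← sum_range_reflect]
  refine sum_congr rfl fun t ht => ?_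
  obtain ⟨u, rfl⟩ := Nat.exists_eq_add_of_le (Nat.lt_succ_iff.1 (mem_range.1 ht))
  rw [add_tsub_cancel_right, add_tsub_cancel_left, pow_add]
  linear_combination (-1) ^ t * a u * neg_one_pow_mul_neg_one_pow_self (R := R) u

theorem neg_one_pow_mul_sum_range_succ_eq_tail {a : ℕ → R} {d k : ℕ} (hk : k ≤ d)
    (hsum : ∑ j ∈ range (d + 1), (-1 : R) ^ j * a j = 0) :
    (-1 : R) ^ k * ∑ j ∈ range (k + 1), (-1) ^ j * a j
      = ∑ t ∈ range (d - k), (-1) ^ t * a (k + 1 + t) := by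
  rw [show d + 1 = k + 1 + (d - k) by omega, sum_range_add, add_eq_zero_iff_eq_neg] at hsum
  rw [hsum, mul_neg, mul_sum, ← sum_neg_distrib]
  refine sum_congr rfl fun t _ => ?_
  rw [pow_add, pow_succ]
  linear_combination (-1) ^ t * a (k + 1 + t) * neg_one_pow_mul_neg_one_pow_self (R := R) k

end NegOnePow

/-- If `a_0, …, a_d` is a unimodal sequence of positive reals with
`Σ_{j=0}^d (−1)^j a_j = 0`, then for every `k ∈ {0,…,d}` one has
`(−1)^k · Σ_{j=0}^k (−1)^j a_j ≥ 0`. -/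
theorem stmt12 (d : ℕ) (a : ℕ → ℝ)
    (hpos : ∀ j ≤ d, 0 < a j)
    (hunimodal : ∃ m ≤ d,
      (∀ i j, i ≤ j → j ≤ m → a i ≤ a j) ∧ (∀ i j, m ≤ i → i ≤ j → j ≤ d → a j ≤ a i))
    (hsum : ∑ j ∈ Finset.range (d + 1), (-1 : ℝ) ^ j * a j = 0) :
    ∀ k ≤ d, 0 ≤ (-1 : ℝ) ^ k * ∑ j ∈ Finset.range (k + 1), (-1 : ℝ) ^ j * a j := by
  obtain ⟨m, -, hmono, hanti⟩ := hunimodal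
  intro k hk
  rcases le_total k m with hkm | hmk
  · rw [neg_one_pow_mul_sum_range_succ_eq_reflect]
    refine sum_range_neg_one_pow_mul_nonneg_of_antitoneOn
      (fun t ht => (hpos _ (by omega)).le) fun i hi j hj hij => ?_
    simp only [Set.mem_Iio] at hi hj
    exact hmono _ _ (by omega) (by omega)
  · rw [neg_one_pow_mul_sum_range_succ_eq_tail hk hsum]
    refine sum_range_neg_one_pow_mul_nonneg_of_antitoneOn
      (fun t ht => (hpos _ (by omega)).le) fun i hi j hj hij => ?_
    simp only [Set.mem_Iio] at hi hj
    exact hanti _ _ (by omega) (by omega) (by omega)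
end

section
/- For integers j ≥ 0 and ℓ ≥ 0 with ℓ ≤ n, let h_j : {±1}^n → ℝ be defined by h_j(x) = (x_1 + ⋯ + x_n)^j, and let S ⊆ [n] with |S| = ℓ. Then the Fourier coefficient ĥ_j(S) satisfies: ĥ_j(S) = 0 if j < ℓ or j ≢ ℓ (mod 2); ĥ_j(S) = ℓ! if j = ℓ; and 0 ≤ ĥ_j(S) ≤ j!·n^{(j−ℓ)/2} if j > ℓ. -/
section AuxStmt15
open Finset

/-- number of `k` with `f k = i` -/
def cnt {n j : ℕ} (f : Fin j → Fin n) (i : Fin n) : ℕ := ∑ k, if f k = i then 1 else 0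

/-- fiber counts of `f` have parity pattern `S` -/
def good {n j : ℕ} (S : Finset (Fin n)) (f : Fin j → Fin n) : Prop :=
  ∀ i, cnt f i % 2 = if i ∈ S then 1 else 0

noncomputable def Ncnt (n j : ℕ) (S : Finset (Fin n)) : ℕ :=
  Nat.card {f : Fin j → Fin n // good S f}

lemma sum_cnt {n j : ℕ} (f : Fin j → Fin n) : ∑ i, cnt f i = j := by
  unfold cnt
  rw [Finset.sum_comm]
  simp

lemma good_card_le {n j : ℕ} {S : Finset (Fin n)} {f : Fin j → Fin n}
    (hf : good S f) : S.card ≤ j := by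
  have h1 : ∀ i ∈ S, 1 ≤ cnt f i := by
    intro i hi
    have := hf i
    simp only [hi, if_true] at this
    omega
  calc S.card = ∑ i ∈ S, 1 := by simp
    _ ≤ ∑ i ∈ S, cnt f i := Finset.sum_le_sum h1
    _ ≤ ∑ i, cnt f i := Finset.sum_le_sum_of_subset (subset_univ S)
    _ = j := sum_cnt f

lemma good_parity {n j : ℕ} {S : Finset (Fin n)} {f : Fin j → Fin n}
    (hf : good S f) : j % 2 = S.card % 2 := by
  have h1 : (∑ i, cnt f i) % 2 = (∑ i, (if i ∈ S then 1 else 0)) % 2 := by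
    rw [Finset.sum_nat_mod, Finset.sum_congr rfl (fun i _ => hf i)]
  have h2 : (∑ i, (if i ∈ S then 1 else 0)) = S.card := by
    simp [Finset.sum_ite_mem]
  rw [sum_cnt f, h2] at h1
  exact h1

lemma cnt_cons {n j : ℕ} (a : Fin n) (g : Fin j → Fin n) (i : Fin n) :
    cnt (Fin.cons a g) i = (if a = i then 1 else 0) + cnt g i := by
  unfold cnt
  rw [Fin.sum_univ_succ]
  simp

lemma good_cons {n j : ℕ} (S : Finset (Fin n)) (a : Fin n) (g : Fin j → Fin n) :
    good S (Fin.cons a g) ↔ good (symmDiff S {a}) g := by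
  refine forall_congr' fun i => ?_
  rw [cnt_cons]
  by_cases hia : a = i
  · subst hia
    by_cases hm : a ∈ S <;> simp only [Finset.mem_symmDiff, Finset.mem_singleton, hm,
      if_true, if_false, not_true, not_false_iff, and_true, and_false, true_and, false_and,
      or_false, false_or, eq_self_iff_true, if_pos rfl] <;> omega
  · have hmem : i ∈ symmDiff S {a} ↔ i ∈ S := by
      simp [Finset.mem_symmDiff, Ne.symm hia]
    simp [hia, hmem]

noncomputable def goodEquiv {n j : ℕ} (S : Finset (Fin n)) :
    {f : Fin (j+1) → Fin n // good S f} ≃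
      Σ a : Fin n, {g : Fin j → Fin n // good (symmDiff S {a}) g} where
  toFun f := ⟨f.1 0, ⟨Fin.tail f.1, by
    have h2 := f.2
    rw [← Fin.cons_self_tail f.1, good_cons] at h2
    exact h2⟩⟩
  invFun p := ⟨Fin.cons p.1 p.2.1, (good_cons S p.1 p.2.1).2 p.2.2⟩
  left_inv f := by
    apply Subtype.ext
    exact Fin.cons_self_tail f.1
  right_inv p := by
    rcases p with ⟨a, g, hg⟩
    refine Sigma.subtype_ext ?_ ?_
    · simp
    · simp

lemma Ncnt_succ (n j : ℕ) (S : Finset (Fin n)) :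
    Ncnt n (j+1) S = ∑ a : Fin n, Ncnt n j (symmDiff S {a}) := by
  classical
  rw [Ncnt, Nat.card_congr (goodEquiv S), Nat.card_eq_fintype_card, Fintype.card_sigma]
  refine Finset.sum_congr rfl fun a _ => ?_
  rw [Ncnt, Nat.card_eq_fintype_card]

lemma Ncnt_zero_empty (n : ℕ) : Ncnt n 0 (∅ : Finset (Fin n)) = 1 := by
  have hu : ∀ f : Fin 0 → Fin n, good (∅ : Finset (Fin n)) f := by
    intro f i
    simp [cnt]
  haveI : Unique {f : Fin 0 → Fin n // good (∅ : Finset (Fin n)) f} :=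
    { default := ⟨fun k => k.elim0, hu _⟩
      uniq := fun f => by
        apply Subtype.ext
        funext k
        exact k.elim0 }
  exact Nat.card_unique

lemma Ncnt_vanish {n j : ℕ} {S : Finset (Fin n)}
    (h : j < S.card ∨ j % 2 ≠ S.card % 2) : Ncnt n j S = 0 := by
  haveI : IsEmpty {f : Fin j → Fin n // good S f} := by
    constructor
    rintro ⟨f, hf⟩
    rcases h with h | h
    · exact absurd (good_card_le hf) (by omega)
    · exact h (good_parity hf)
  exact Nat.card_of_isEmpty

lemma symmDiff_singleton_mem {n : ℕ} {S : Finset (Fin n)} {a : Fin n} (ha : a ∈ S) :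
    symmDiff S {a} = S.erase a := by
  ext i
  by_cases hia : i = a <;> simp [Finset.mem_symmDiff, hia, ha]

lemma symmDiff_singleton_not_mem {n : ℕ} {S : Finset (Fin n)} {a : Fin n} (ha : a ∉ S) :
    symmDiff S {a} = insert a S := by
  ext i
  by_cases hia : i = a <;> simp [Finset.mem_symmDiff, hia, ha]

lemma Ncnt_exact (n : ℕ) : ∀ j (S : Finset (Fin n)), S.card = j →
    Ncnt n j S = Nat.factorial j := by
  intro j
  induction j with
  | zero =>
    intro S hS
    rw [Finset.card_eq_zero] at hS
    subst hS
    simpa using Ncnt_zero_empty n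
  | succ j ih =>
    intro S hS
    rw [Ncnt_succ, ← Finset.sum_add_sum_compl S]
    have h1 : ∀ a ∈ S, Ncnt n j (symmDiff S {a}) = Nat.factorial j := by
      intro a ha
      rw [symmDiff_singleton_mem ha]
      exact ih _ (by rw [Finset.card_erase_of_mem ha, hS]; omega)
    have h2 : ∀ a ∈ Sᶜ, Ncnt n j (symmDiff S {a}) = 0 := by
      intro a ha
      rw [Finset.mem_compl] at ha
      rw [symmDiff_singleton_not_mem ha]
      apply Ncnt_vanish
      left
      rw [Finset.card_insert_of_notMem ha, hS]
      omega
    rw [Finset.sum_congr rfl h1, Finset.sum_congr rfl h2, Finset.sum_const, Finset.sum_const,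
      hS, smul_eq_mul, smul_eq_mul, Nat.factorial_succ]
    ring

lemma Ncnt_le (n : ℕ) : ∀ j (S : Finset (Fin n)), S.card ≤ j →
    Ncnt n j S ≤ Nat.factorial j * n ^ ((j - S.card) / 2) := by
  intro j
  induction j with
  | zero =>
    intro S hS
    have hS0 : S = ∅ := Finset.card_eq_zero.mp (Nat.le_zero.mp hS)
    subst hS0
    simp [Ncnt_zero_empty n]
  | succ j ih =>
    intro S hS
    have hℓ : S.card ≤ j + 1 := hS
    set X : ℕ := Nat.factorial j * n ^ ((j + 1 - S.card) / 2) with hX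
    have hb1 : ∑ a ∈ S, Ncnt n j (symmDiff S {a}) ≤ S.card * X := by
      have hterm : ∀ a ∈ S, Ncnt n j (symmDiff S {a}) ≤ X := by
        intro a ha
        rw [symmDiff_singleton_mem ha]
        have hℓ1 : 1 ≤ S.card := Finset.card_pos.mpr ⟨a, ha⟩
        have hc : (S.erase a).card = S.card - 1 := Finset.card_erase_of_mem ha
        have h3 := ih (S.erase a) (by omega)
        rw [hc] at h3
        have hexp : (j - (S.card - 1)) / 2 = (j + 1 - S.card) / 2 := by omega
        rwa [hexp] at h3
      calc ∑ a ∈ S, Ncnt n j (symmDiff S {a}) ≤ ∑ _a ∈ S, X := Finset.sum_le_sum hterm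
        _ = S.card * X := by rw [Finset.sum_const, smul_eq_mul]
    by_cases hcase : S.card = j + 1
    · have hb2 : ∀ a ∈ Sᶜ, Ncnt n j (symmDiff S {a}) = 0 := by
        intro a ha
        rw [Finset.mem_compl] at ha
        rw [symmDiff_singleton_not_mem ha]
        exact Ncnt_vanish (Or.inl (by rw [Finset.card_insert_of_notMem ha]; omega))
      rw [Ncnt_succ, ← Finset.sum_add_sum_compl S, Finset.sum_congr rfl hb2,
        Finset.sum_const, smul_zero, add_zero]
      calc ∑ a ∈ S, Ncnt n j (symmDiff S {a}) ≤ S.card * X := hb1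
        _ = Nat.factorial (j + 1) * n ^ ((j + 1 - S.card) / 2) := by
          rw [hX, hcase, Nat.factorial_succ]; ring
    · -- S.card ≤ j
      have hcard : S.card ≤ j := by omega
      have hb2 : ∑ a ∈ Sᶜ, Ncnt n j (symmDiff S {a}) ≤ X := by
        by_cases hj : S.card + 1 ≤ j
        · have hterm : ∀ a ∈ Sᶜ, Ncnt n j (symmDiff S {a}) ≤
              Nat.factorial j * n ^ ((j - (S.card + 1)) / 2) := by
            intro a ha
            rw [Finset.mem_compl] at ha
            rw [symmDiff_singleton_not_mem ha]
            have h3 := ih (insert a S) (by rw [Finset.card_insert_of_notMem ha]; omega)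
            rwa [Finset.card_insert_of_notMem ha] at h3
          calc ∑ a ∈ Sᶜ, Ncnt n j (symmDiff S {a})
              ≤ ∑ _a ∈ Sᶜ, Nat.factorial j * n ^ ((j - (S.card + 1)) / 2) :=
                Finset.sum_le_sum hterm
            _ = Sᶜ.card * (Nat.factorial j * n ^ ((j - (S.card + 1)) / 2)) := by
                rw [Finset.sum_const, smul_eq_mul]
            _ ≤ n * (Nat.factorial j * n ^ ((j - (S.card + 1)) / 2)) :=
                Nat.mul_le_mul_right _
                  (by simpa using Finset.card_le_card (Finset.subset_univ Sᶜ))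
            _ = Nat.factorial j * n ^ ((j - (S.card + 1)) / 2 + 1) := by ring
            _ = X := by
                rw [hX]
                congr 1
                congr 1
                omega
        · -- j = S.card, terms vanish
          have hterm : ∀ a ∈ Sᶜ, Ncnt n j (symmDiff S {a}) = 0 := by
            intro a ha
            rw [Finset.mem_compl] at ha
            rw [symmDiff_singleton_not_mem ha]
            exact Ncnt_vanish (Or.inl (by rw [Finset.card_insert_of_notMem ha]; omega))
          rw [Finset.sum_congr rfl hterm, Finset.sum_const, smul_zero]
          exact Nat.zero_le _
      rw [Ncnt_succ, ← Finset.sum_add_sum_compl S]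
      calc ∑ a ∈ S, Ncnt n j (symmDiff S {a}) + ∑ a ∈ Sᶜ, Ncnt n j (symmDiff S {a})
          ≤ S.card * X + X := Nat.add_le_add hb1 hb2
        _ = (S.card + 1) * X := by ring
        _ ≤ (j + 1) * X := Nat.mul_le_mul_right _ (by omega)
        _ = Nat.factorial (j + 1) * n ^ ((j + 1 - S.card) / 2) := by
          rw [hX, Nat.factorial_succ]; ring

lemma sum_sgn_pow (e : ℕ) : ∑ b : Bool, sgn b ^ e = if e % 2 = 0 then 2 else 0 := by
  rcases Nat.even_or_odd e with he | he
  · rw [Fintype.sum_bool]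
    simp [sgn, he.neg_one_pow, Nat.even_iff.mp he]
    norm_num
  · rw [Fintype.sum_bool]
    simp [sgn, he.neg_one_pow, Nat.odd_iff.mp he]

lemma chi_eq {n : ℕ} (S : Finset (Fin n)) (x : Fin n → Bool) :
    chi S x = ∏ i, sgn (x i) ^ (if i ∈ S then 1 else 0) := by
  rw [chi]
  rw [show (∏ i, sgn (x i) ^ (if i ∈ S then 1 else 0)) =
      ∏ i, (if i ∈ S then sgn (x i) else 1) from
    Finset.prod_congr rfl fun i _ => by split <;> simp]
  rw [Finset.prod_ite_mem, Finset.univ_inter]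

lemma prod_comp_eq {n j : ℕ} (f : Fin j → Fin n) (x : Fin n → Bool) :
    ∏ k, sgn (x (f k)) = ∏ i, sgn (x i) ^ cnt f i := by
  have h1 : ∀ k, sgn (x (f k)) = ∏ i, sgn (x i) ^ (if f k = i then 1 else 0) := by
    intro k
    rw [show (∏ i, sgn (x i) ^ (if f k = i then 1 else 0)) =
        ∏ i, (if f k = i then sgn (x i) else 1) from
      Finset.prod_congr rfl fun i _ => by split <;> simp]
    simp
  rw [Finset.prod_congr rfl fun k _ => h1 k, Finset.prod_comm]
  refine Finset.prod_congr rfl fun i _ => ?_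
  rw [Finset.prod_pow_eq_pow_sum]
  rfl

lemma fcoeff_eq_Ncnt {n j : ℕ} (h : (Fin n → Bool) → ℝ)
    (hh : ∀ x, h x = (∑ i, sgn (x i)) ^ j) (S : Finset (Fin n)) :
    fcoeff h S = Ncnt n j S := by
  classical
  have key : ∑ x : Fin n → Bool, h x * chi S x = (Ncnt n j S : ℝ) * 2 ^ n := by
    have step1 : ∀ x : Fin n → Bool, h x * chi S x =
        ∑ f : Fin j → Fin n, ∏ i, sgn (x i) ^ (cnt f i + if i ∈ S then 1 else 0) := by
      intro x
      rw [hh, Fintype.sum_pow, Finset.sum_mul]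
      refine Finset.sum_congr rfl fun f _ => ?_
      rw [prod_comp_eq, chi_eq, ← Finset.prod_mul_distrib]
      exact Finset.prod_congr rfl fun i _ => (pow_add _ _ _).symm
    rw [Finset.sum_congr rfl fun x _ => step1 x, Finset.sum_comm]
    have step2 : ∀ f : Fin j → Fin n,
        (∑ x : Fin n → Bool, ∏ i, sgn (x i) ^ (cnt f i + if i ∈ S then 1 else 0)) =
        if good S f then (2 : ℝ) ^ n else 0 := by
      intro f
      rw [← Fintype.piFinset_univ, Finset.sum_prod_piFinset (Finset.univ : Finset Bool)
        (fun i b => sgn b ^ (cnt f i + if i ∈ S then 1 else 0))]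
      have hfact : ∀ i : Fin n, (∑ b : Bool, sgn b ^ (cnt f i + if i ∈ S then 1 else 0)) =
          if (cnt f i + if i ∈ S then 1 else 0) % 2 = 0 then (2:ℝ) else 0 := fun i =>
        sum_sgn_pow _
      rw [Finset.prod_congr rfl fun i _ => hfact i]
      by_cases hg : good S f
      · rw [if_pos hg]
        have hfac2 : ∀ i ∈ (Finset.univ : Finset (Fin n)),
            (if (cnt f i + if i ∈ S then 1 else 0) % 2 = 0 then (2:ℝ) else 0) = 2 := by
          intro i _
          have h2 := hg i
          by_cases hm : i ∈ S <;> simp only [hm, if_true, if_false] at h2 ⊢ <;>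
            rw [if_pos (by omega)]
        rw [Finset.prod_congr rfl hfac2, Finset.prod_const, Finset.card_univ, Fintype.card_fin]
      · rw [if_neg hg]
        rw [good] at hg
        push_neg at hg
        obtain ⟨i, hi⟩ := hg
        refine Finset.prod_eq_zero (Finset.mem_univ i) ?_
        by_cases hm : i ∈ S <;> simp only [hm, if_true, if_false] at hi ⊢ <;>
          rw [if_neg (by omega)]
    have hN : (Ncnt n j S : ℝ) = ((Finset.univ.filter (fun f : Fin j → Fin n => good S f)).card : ℝ) := by
      rw [Ncnt, Nat.card_eq_fintype_card, Fintype.card_subtype]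
    rw [Finset.sum_congr rfl fun f _ => step2 f, Finset.sum_ite, Finset.sum_const,
      Finset.sum_const_zero, add_zero, hN, nsmul_eq_mul]
  rw [fcoeff, key, mul_div_assoc, div_self (by positivity), mul_one]

end AuxStmt15

/-- Fourier coefficients of `h_j(x) = (x_1 + ⋯ + x_n)^j` on a set `S` with `|S| = ℓ`:
they vanish if `j < ℓ` or `j ≢ ℓ (mod 2)`, equal `ℓ!` if `j = ℓ`, and lie in
`[0, j!·n^{(j−ℓ)/2}]` if `j > ℓ`. -/
theorem stmt15 (n j ℓ : ℕ) (hℓ : ℓ ≤ n)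
    (h : (Fin n → Bool) → ℝ) (hh : ∀ x, h x = (∑ i, sgn (x i)) ^ j)
    (S : Finset (Fin n)) (hS : S.card = ℓ) :
    (j < ℓ ∨ j % 2 ≠ ℓ % 2 → fcoeff h S = 0) ∧
    (j = ℓ → fcoeff h S = Nat.factorial ℓ) ∧
    (ℓ < j → 0 ≤ fcoeff h S ∧
      fcoeff h S ≤ (Nat.factorial j : ℝ) * (n : ℝ) ^ (((j : ℝ) - ℓ) / 2)) := by
  have hfc : fcoeff h S = (Ncnt n j S : ℝ) := fcoeff_eq_Ncnt h hh S
  refine ⟨?_, ?_, ?_⟩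
  · intro hcond
    rw [hfc]
    norm_cast
    apply Ncnt_vanish
    rw [hS]
    tauto
  · intro hj
    rcases hj
    rw [hfc]
    norm_cast
    exact Ncnt_exact n _ S hS
  · intro hlt
    refine ⟨by rw [hfc]; positivity, ?_⟩
    rw [hfc]
    by_cases hpar : j % 2 = ℓ % 2
    · obtain ⟨m, hm⟩ : ∃ m, j = ℓ + 2 * m := ⟨(j - ℓ) / 2, by omega⟩
      have hb := Ncnt_le n j S (by omega)
      rw [hS] at hb
      have hexp : (j - ℓ) / 2 = m := by omega
      rw [hexp] at hb
      have hcast : ((j : ℝ) - ℓ) / 2 = (m : ℕ) := by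
        subst hm
        push_cast
        ring
      rw [hcast, Real.rpow_natCast]
      exact_mod_cast hb
    · rw [Ncnt_vanish (Or.inr (by rw [hS]; exact hpar))]
      simp only [Nat.cast_zero]
      positivity
end
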